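/- arXiv:2506.11265 — 3 statements merged into one kernel-verified Lean document; each statement's English description precedes it below -/
import Mathlib

section
/- Any two topes of an (n,d)-pre-trianguloid are compatible with each other. Consequently, every (n,d)-pre-trianguloid is an extended (n,d)-tope arrangement. -/
open Finset

/-- A bipartite graph between `α` and `β`, identified with its edge set. -/
abbrev BGraph (α β : Type*) := Finset (α × β)

section BipartiteDefs

variable {α β : Type*} [DecidableEq α] [DecidableEq β]

/-- Left degree vector. -/
def LD (G : BGraph α β) (a : α) : ℕ := (G.filter fun e => e.1 = a).card

/-- Right degree vector. -/
def RD (G : BGraph α β) (b : β) : ℕ := (G.filter fun e => e.2 = b).card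

/-- The simple graph on `α ⊕ β` associated to a bipartite edge set. -/
def toGraph (G : BGraph α β) : SimpleGraph (α ⊕ β) :=
  SimpleGraph.fromRel fun x y => ∃ a b, x = Sum.inl a ∧ y = Sum.inr b ∧ (a, b) ∈ G

/-- Acyclicity of a bipartite edge set. -/
def Acyclic (G : BGraph α β) : Prop := (toGraph G).IsAcyclic

/-- `U` is a tree on the vertex set `I ⊔ J`. -/
def IsTreeOn (U : BGraph α β) (I : Finset α) (J : Finset β) : Prop :=
  (∀ e ∈ U, e.1 ∈ I ∧ e.2 ∈ J) ∧ Acyclic U ∧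
    ∀ x y : α ⊕ β, Sum.elim (· ∈ I) (· ∈ J) x → Sum.elim (· ∈ I) (· ∈ J) y →
      (toGraph U).Reachable x y

/-- `M` is a perfect matching between `I` and `J`. -/
def IsMatching (M : BGraph α β) (I : Finset α) (J : Finset β) : Prop :=
  (∀ e ∈ M, e.1 ∈ I ∧ e.2 ∈ J) ∧ (∀ a ∈ I, ∃! b : β, (a, b) ∈ M) ∧
    ∀ b ∈ J, ∃! a : α, (a, b) ∈ M

/-- Compatibility of two bipartite graphs. -/
def Compatible (G G' : BGraph α β) : Prop :=
  ∀ (I : Finset α) (J : Finset β) (M M' : BGraph α β),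
    M ⊆ G → M' ⊆ G' → IsMatching M I J → IsMatching M' I J → M = M'

end BipartiteDefs

section TopeDefs

variable {n d : ℕ}

/-- The graph of a tope `T : [n] → [d]`. -/
def topeGraph (T : Fin n → Fin d) : BGraph (Fin n) (Fin d) :=
  Finset.univ.image fun i => (i, T i)

/-- The position (right degree vector) of a tope. -/
def topePos (T : Fin n → Fin d) : Fin d → ℕ :=
  fun j => (Finset.univ.filter fun i => T i = j).card

/-- Standard unit vector `e_j`. -/
def unitVec (j : Fin d) : Fin d → ℕ := fun k => if k = j then 1 else 0

end TopeDefs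

/-!
Induct on the ground set. If the common matching covers every element, both positions are the
indicator vector of `J`, so the two topes are equal. Otherwise delete an element `i₀` outside the
matching. For `u` one level down, all topes `T (u + e c)` in which `i₀` takes the colour `c` agree
away from `i₀`; they form a pre-trianguloid on the remaining elements which, at `v - e (T v i₀)`,
agrees with `T v` away from `i₀`.
-/

namespace Finset

variable {α β : Type*}

theorem eq_erase_of_subset_of_card_le [DecidableEq α] {s t : Finset α} {a : α} (hst : s ⊆ t)
    (hat : a ∈ t) (has : a ∉ s) (hcard : #t ≤ #s + 1) : s = t.erase a := by
  refine eq_of_subset_of_card_le (fun x hx => mem_erase.mpr ⟨?_, hst hx⟩) ?_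
  · rintro rfl
    exact has hx
  · rw [card_erase_of_mem hat]
    omega

theorem card_filter_eq_ite_of_injOn [DecidableEq β] {s : Finset α} {f : α → β}
    (hf : Set.InjOn f s) (b : β) : #{x ∈ s | f x = b} = if b ∈ s.image f then 1 else 0 := by
  split_ifs with hb
  · obtain ⟨x, hx, rfl⟩ := mem_image.mp hb
    rw [card_eq_one]
    refine ⟨x, ext fun y => ?_⟩
    simp only [mem_filter, mem_singleton]
    exact ⟨fun ⟨hy, h⟩ => hf hy hx h, by rintro rfl; exact ⟨hx, rfl⟩⟩
  · rw [card_eq_zero, filter_eq_empty_iff]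
    exact fun x hx h => hb (mem_image.mpr ⟨x, hx, h⟩)

end Finset

section PreTrianguloid

variable {ι κ : Type*} [DecidableEq κ] [Fintype κ]

theorem sum_add_single (u : κ → ℕ) (s : κ) :
    ∑ k, (u + Pi.single s 1 : κ → ℕ) k = ∑ k, u k + 1 := by
  simp [Finset.sum_add_distrib]

/-- Positions and the sector axiom only see the topes on the ground set `S`, so that elements can
be deleted; `Pi.single j 1` is the unit vector `e_j`. -/
structure IsPreTrianguloid (S : Finset ι) (T : (κ → ℕ) → ι → κ) : Prop where
  card_filter : ∀ v : κ → ℕ, ∑ k, v k = #S → ∀ a, #{i ∈ S | T v i = a} = v a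
  sector : ∀ (u : κ → ℕ) (j j' : κ), ∑ k, u k + 1 = #S →
    ∀ i ∈ S, T (u + Pi.single j' 1) i = j → T (u + Pi.single j 1) i = j

namespace IsPreTrianguloid

variable {S : Finset ι} {T : (κ → ℕ) → ι → κ} {u : κ → ℕ}

theorem card_filter_add_single (hT : IsPreTrianguloid S T) (hu : ∑ k, u k + 1 = #S) (s a : κ) :
    #{i ∈ S | T (u + Pi.single s 1) i = a} = u a + if a = s then 1 else 0 := by
  rw [hT.card_filter _ (by rw [sum_add_single, hu]), Pi.add_apply, Pi.single_apply]

theorem exists_apply_eq_and_apply_ne (hT : IsPreTrianguloid S T) (hu : ∑ k, u k + 1 = #S)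
    {s s' a : κ} (hs : a ≠ s) (hs' : a ≠ s') {y : ι} (hy : y ∈ S)
    (hys' : T (u + Pi.single s' 1) y = a) (hys : T (u + Pi.single s 1) y ≠ a) :
    ∃ z ∈ S, T (u + Pi.single s 1) z = a ∧ T (u + Pi.single s' 1) z ≠ a := by
  by_contra! h
  have hsub : {i ∈ S | T (u + Pi.single s 1) i = a} ⊆ {i ∈ S | T (u + Pi.single s' 1) i = a} :=
    fun i hi => by
      rw [mem_filter] at hi ⊢
      exact ⟨hi.1, h i hi.1 hi.2⟩
  have heq := eq_of_subset_of_card_le hsub (by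
    rw [hT.card_filter_add_single hu, hT.card_filter_add_single hu, if_neg hs, if_neg hs'])
  have hy' : y ∈ {i ∈ S | T (u + Pi.single s' 1) i = a} := mem_filter.mpr ⟨hy, hys'⟩
  rw [← heq] at hy'
  exact hys (mem_filter.mp hy').2

theorem sub_single_add_single (hT : IsPreTrianguloid S T) {v : κ → ℕ} (hv : ∑ k, v k = #S)
    {i : ι} (hi : i ∈ S) : v - Pi.single (T v i) 1 + Pi.single (T v i) 1 = v := by
  have hpos : 1 ≤ v (T v i) := by
    rw [← hT.card_filter v hv, Nat.one_le_iff_ne_zero, Ne, card_eq_zero]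
    exact ne_empty_of_mem (mem_filter.mpr ⟨hi, rfl⟩)
  funext k
  rcases eq_or_ne k (T v i) with rfl | hk
  · simp only [Pi.add_apply, Pi.sub_apply, Pi.single_eq_same]
    omega
  · simp [hk]

theorem sum_sub_single_add_one (hT : IsPreTrianguloid S T) {v : κ → ℕ} (hv : ∑ k, v k = #S)
    {i : ι} (hi : i ∈ S) : ∑ k, (v - Pi.single (T v i) 1 : κ → ℕ) k + 1 = #S := by
  rw [← sum_add_single, hT.sub_single_add_single hv hi, hv]

variable [DecidableEq ι]

theorem filter_eq_erase (hT : IsPreTrianguloid S T) (hu : ∑ k, u k + 1 = #S) {s a : κ} {z : ι}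
    (hz : z ∈ S) (hza : T (u + Pi.single a 1) z = a) (hzs : T (u + Pi.single s 1) z ≠ a) :
    {i ∈ S | T (u + Pi.single s 1) i = a} = {i ∈ S | T (u + Pi.single a 1) i = a}.erase z := by
  have hsa : a ≠ s := by
    rintro rfl
    exact hzs hza
  refine eq_erase_of_subset_of_card_le ?_ (mem_filter.mpr ⟨hz, hza⟩)
    (fun h => hzs (mem_filter.mp h).2) ?_
  · intro i hi
    obtain ⟨hiS, hia⟩ := mem_filter.mp hi
    exact mem_filter.mpr ⟨hiS, hT.sector u a s hu i hiS hia⟩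
  · rw [hT.card_filter_add_single hu, hT.card_filter_add_single hu, if_pos rfl, if_neg hsa]

variable {i₀ : ι} {c c' : κ}

theorem apply_ne_and_ne_of_apply_ne (hT : IsPreTrianguloid S T) (hu : ∑ k, u k + 1 = #S)
    (hi₀ : i₀ ∈ S) (hc : T (u + Pi.single c 1) i₀ = c) (hc' : T (u + Pi.single c' 1) i₀ = c')
    {z : ι} (hz : z ∈ S) (hzi : z ≠ i₀)
    (hfg : T (u + Pi.single c 1) z ≠ T (u + Pi.single c' 1) z) :
    T (u + Pi.single c' 1) z ≠ c ∧ T (u + Pi.single c' 1) z ≠ c' := by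
  refine ⟨fun h => hfg (h ▸ hT.sector u c c' hu z hz h), fun h => hfg ?_⟩
  have hcc : c ≠ c' := by
    rintro rfl
    exact hfg rfl
  have hz' : z ∈ {i ∈ S | T (u + Pi.single c 1) i = c'} := by
    rw [hT.filter_eq_erase hu hi₀ hc' (hc.trans_ne hcc)]
    exact mem_erase.mpr ⟨hzi, mem_filter.mpr ⟨hz, h⟩⟩
  exact (mem_filter.mp hz').2.trans h.symm

theorem exists_next_of_apply_ne (hT : IsPreTrianguloid S T) (hu : ∑ k, u k + 1 = #S)
    (hi₀ : i₀ ∈ S) (hc : T (u + Pi.single c 1) i₀ = c) (hc' : T (u + Pi.single c' 1) i₀ = c')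
    (b : κ) {z : ι} (hz : z ∈ S) (hzi : z ≠ i₀)
    (hfg : T (u + Pi.single c 1) z ≠ T (u + Pi.single c' 1) z)
    (hbz : T (u + Pi.single b 1) z = T (u + Pi.single c 1) z) :
    ∃ z' ∈ S, z' ≠ i₀ ∧ T (u + Pi.single c 1) z' ≠ T (u + Pi.single c' 1) z' ∧
      T (u + Pi.single b 1) z' = T (u + Pi.single c 1) z' ∧
      T (u + Pi.single c 1) z' = T (u + Pi.single c' 1) z := by
  set a := T (u + Pi.single c' 1) z
  obtain ⟨hac, hac'⟩ := hT.apply_ne_and_ne_of_apply_ne hu hi₀ hc hc' hz hzi hfg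
  obtain ⟨z', hz', hcz', hc'z'⟩ := hT.exists_apply_eq_and_apply_ne hu hac hac' hz rfl hfg
  have haz := hT.sector u a c' hu z hz rfl
  have hbz' : z' ∈ {i ∈ S | T (u + Pi.single b 1) i = a} := by
    rw [hT.filter_eq_erase hu hz haz (hbz.trans_ne hfg), ← hT.filter_eq_erase hu hz haz hfg]
    exact mem_filter.mpr ⟨hz', hcz'⟩
  refine ⟨z', hz', ?_, fun h => hc'z' (h.symm.trans hcz'), (mem_filter.mp hbz').2.trans hcz'.symm,
    hcz'⟩
  rintro rfl
  exact hac (hcz'.symm.trans hc)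

theorem eqOn_erase_of_apply_self (hT : IsPreTrianguloid S T) (hu : ∑ k, u k + 1 = #S)
    (hi₀ : i₀ ∈ S) (hc : T (u + Pi.single c 1) i₀ = c) (hc' : T (u + Pi.single c' 1) i₀ = c') :
    Set.EqOn (T (u + Pi.single c 1)) (T (u + Pi.single c' 1)) (S.erase i₀) := by
  set f := T (u + Pi.single c 1)
  set g := T (u + Pi.single c' 1)
  by_contra hne
  obtain ⟨x, hxS, hxi, hfx⟩ : ∃ x ∈ S, x ≠ i₀ ∧ f x ≠ g x := by
    simpa [Set.EqOn] using hne
  set b := g x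
  set h := T (u + Pi.single b 1)
  -- On the set `R` where `h` sides with `f` against `g`, `g` is injective with `g '' R ⊆ f '' R`,
  -- yet `b ∈ f '' R \ g '' R`.
  set R := {z ∈ S | z ≠ i₀ ∧ f z ≠ g z ∧ h z = f z}
  have hR_ne_b : ∀ z ∈ R, g z ≠ b := by
    intro z hz hzb
    obtain ⟨hzS, -, hfg, hhf⟩ := mem_filter.mp hz
    exact hfg (hhf ▸ hzb ▸ hT.sector u b c' hu z hzS hzb)
  have hg_inj : Set.InjOn g R := by
    intro z hz z' hz' hzz'
    obtain ⟨hzS, -, hfg, hhf⟩ := mem_filter.mp hz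
    obtain ⟨hz'S, -, hfg', hhf'⟩ := mem_filter.mp hz'
    have hgz := hT.sector u (g z) c' hu z hzS rfl
    have hgz' : T (u + Pi.single (g z) 1) z' = g z :=
      hzz' ▸ hT.sector u (g z') c' hu z' hz'S rfl
    have hzF : z ∈ {i ∈ S | T (u + Pi.single (g z) 1) i = g z} := mem_filter.mpr ⟨hzS, hgz⟩
    rw [← erase_inj _ hzF, ← hT.filter_eq_erase hu hzS hgz (hhf.trans_ne hfg),
      hT.filter_eq_erase hu hz'S hgz' (hhf'.trans_ne (hzz' ▸ hfg'))]
  have himage : R.image g ⊆ R.image f := by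
    intro a ha
    obtain ⟨z, hz, rfl⟩ := mem_image.mp ha
    obtain ⟨hzS, hzi, hfg, hhf⟩ := mem_filter.mp hz
    obtain ⟨z', hz'S, hz'i, hfg', hhf', hfz'⟩ :=
      hT.exists_next_of_apply_ne hu hi₀ hc hc' b hzS hzi hfg hhf
    exact mem_image.mpr ⟨z', mem_filter.mpr ⟨hz'S, hz'i, hfg', hhf'⟩, hfz'⟩
  have hb : b ∈ R.image f := by
    obtain ⟨hbc, hbc'⟩ := hT.apply_ne_and_ne_of_apply_ne hu hi₀ hc hc' hxS hxi hfx
    obtain ⟨z, hzS, hfz, hgz⟩ := hT.exists_apply_eq_and_apply_ne hu hbc hbc' hxS rfl hfx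
    refine mem_image.mpr
      ⟨z, mem_filter.mpr ⟨hzS, ?_, fun hfg => hgz (hfg.symm.trans hfz), ?_⟩, hfz⟩
    · rintro rfl
      exact hbc (hfz.symm.trans hc)
    · exact (hT.sector u b c hu z hzS hfz).trans hfz.symm
  have himage_eq := eq_of_subset_of_card_le himage
    (by rw [card_image_of_injOn hg_inj]; exact card_image_le)
  obtain ⟨z, hz, hzb⟩ := mem_image.mp (himage_eq ▸ hb)
  exact hR_ne_b z hz hzb

end IsPreTrianguloid

/-- Deletion of `i₀`: at `u` one level down, take a tope `T (u + e c)` in which `i₀` has colour `c`.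
The sector axiom turns any seed `j₀` into such a `c`, and by
`IsPreTrianguloid.eqOn_erase_of_apply_self` the choice does not matter away from `i₀`. -/
def eraseTopes (T : (κ → ℕ) → ι → κ) (i₀ : ι) (j₀ : κ) (u : κ → ℕ) : ι → κ :=
  T (u + Pi.single (T (u + Pi.single j₀ 1) i₀) 1)

namespace IsPreTrianguloid

variable [DecidableEq ι] {S : Finset ι} {T : (κ → ℕ) → ι → κ} {u : κ → ℕ} {i₀ : ι}

theorem eraseTopes_eqOn (hT : IsPreTrianguloid S T) (hu : ∑ k, u k + 1 = #S) (hi₀ : i₀ ∈ S)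
    (j₀ : κ) {c : κ} (hc : T (u + Pi.single c 1) i₀ = c) :
    Set.EqOn (eraseTopes T i₀ j₀ u) (T (u + Pi.single c 1)) (S.erase i₀) :=
  hT.eqOn_erase_of_apply_self hu hi₀ (hT.sector u _ j₀ hu i₀ hi₀ rfl) hc

theorem eraseTopes_sub_single_eqOn (hT : IsPreTrianguloid S T) {v : κ → ℕ}
    (hv : ∑ k, v k = #S) (hi₀ : i₀ ∈ S) (j₀ : κ) :
    Set.EqOn (eraseTopes T i₀ j₀ (v - Pi.single (T v i₀) 1)) (T v) (S.erase i₀) := by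
  have hvc := hT.sub_single_add_single hv hi₀
  have h := hT.eraseTopes_eqOn (hT.sum_sub_single_add_one hv hi₀) hi₀ j₀ (c := T v i₀)
    (by rw [hvc])
  rwa [hvc] at h

theorem erase (hT : IsPreTrianguloid S T) (hi₀ : i₀ ∈ S) (j₀ : κ) :
    IsPreTrianguloid (S.erase i₀) (eraseTopes T i₀ j₀) where
  card_filter v hv a := by
    have hv' : ∑ k, v k + 1 = #S := by rw [hv, card_erase_add_one hi₀]
    set c := T (v + Pi.single j₀ 1) i₀
    have hc : T (v + Pi.single c 1) i₀ = c := hT.sector v c j₀ hv' i₀ hi₀ rfl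
    change #{i ∈ S.erase i₀ | T (v + Pi.single c 1) i = a} = v a
    rw [filter_erase]
    by_cases hca : c = a
    · rw [card_erase_of_mem (mem_filter.mpr ⟨hi₀, hc.trans hca⟩), hT.card_filter_add_single hv',
        if_pos hca.symm, Nat.add_sub_cancel]
    · have hi₀' : i₀ ∉ {i ∈ S | T (v + Pi.single c 1) i = a} :=
        fun h => hca (hc.symm.trans (mem_filter.mp h).2)
      rw [erase_eq_of_notMem hi₀',
        hT.card_filter_add_single hv', if_neg (Ne.symm hca), Nat.add_zero]
  sector u j j' hu i hi h := by
    have hu' : ∀ s, ∑ k, (u + Pi.single s 1 : κ → ℕ) k + 1 = #S := fun s => by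
      rw [sum_add_single, hu, card_erase_add_one hi₀]
    have hiS := mem_of_mem_erase hi
    set z := T (u + Pi.single j' 1 + Pi.single j 1) i₀
    have hz := hT.sector _ z j (hu' j') i₀ hi₀ rfl
    have hjz : T (u + Pi.single z 1 + Pi.single j' 1) i = j := by
      rw [add_right_comm, ← hT.eraseTopes_eqOn (hu' j') hi₀ j₀ hz hi]
      exact h
    have hzj : T (u + Pi.single j 1 + Pi.single z 1) i₀ = z := by
      refine hT.sector _ z j' (hu' j) i₀ hi₀ ?_
      rw [add_right_comm]
    rw [hT.eraseTopes_eqOn (hu' j) hi₀ j₀ hzj hi, add_right_comm]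
    exact hT.sector _ j j' (hu' z) i hiS hjz

theorem eqOn_of_injOn (hT : IsPreTrianguloid S T) {v v' : κ → ℕ} (hv : ∑ k, v k = #S)
    (hv' : ∑ k, v' k = #S) {I : Finset ι} (hIS : I ⊆ S) (hinj : Set.InjOn (T v) I)
    (hinj' : Set.InjOn (T v') I) (himage : I.image (T v) = I.image (T v')) :
    Set.EqOn (T v) (T v') I := by
  induction S using Finset.strongInduction generalizing T v v' with
  | H S ih =>
  by_cases hSI : S ⊆ I
  · obtain rfl : I = S := hIS.antisymm hSI
    have hvv' : v = v' := funext fun a => by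
      rw [← hT.card_filter v hv, ← hT.card_filter v' hv', card_filter_eq_ite_of_injOn hinj,
        card_filter_eq_ite_of_injOn hinj', himage]
    exact hvv' ▸ Set.eqOn_refl _ _
  · obtain ⟨i₀, hi₀, hi₀I⟩ := not_subset.mp hSI
    have hIS' : I ⊆ S.erase i₀ := fun i hi =>
      mem_erase.mpr ⟨ne_of_mem_of_not_mem hi hi₀I, hIS hi⟩
    have hcard : #(S.erase i₀) + 1 = #S := card_erase_add_one hi₀
    have hagree := (hT.eraseTopes_sub_single_eqOn hv hi₀ (T v i₀)).mono hIS'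
    have hagree' := (hT.eraseTopes_sub_single_eqOn hv' hi₀ (T v i₀)).mono hIS'
    have key := ih _ (erase_ssubset hi₀) (hT.erase hi₀ (T v i₀))
      (by have := hT.sum_sub_single_add_one hv hi₀; omega)
      (by have := hT.sum_sub_single_add_one hv' hi₀; omega) hIS'
      (hinj.congr hagree.symm) (hinj'.congr hagree'.symm)
      (by rw [image_congr hagree, image_congr hagree', himage])
    exact hagree.symm.trans (key.trans hagree')

end IsPreTrianguloid

end PreTrianguloid

section Topes

variable {n d : ℕ}

theorem unitVec_eq_single (j : Fin d) : unitVec j = Pi.single j 1 := by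
  funext k
  simp [unitVec, Pi.single_apply]

theorem mem_topeGraph {f : Fin n → Fin d} {e : Fin n × Fin d} :
    e ∈ topeGraph f ↔ f e.1 = e.2 := by
  simp [topeGraph, Prod.ext_iff, eq_comm]

theorem IsMatching.eq_image_of_subset_topeGraph {M : BGraph (Fin n) (Fin d)}
    {I : Finset (Fin n)} {J : Finset (Fin d)} {f : Fin n → Fin d} (hM : IsMatching M I J)
    (hMf : M ⊆ topeGraph f) :
    M = I.image (fun i => (i, f i)) ∧ Set.InjOn f I ∧ I.image f = J := by
  obtain ⟨hMIJ, hleft, hright⟩ := hM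
  have hmem : ∀ i ∈ I, (i, f i) ∈ M := fun i hi => by
    obtain ⟨b, hb, -⟩ := hleft i hi
    rwa [mem_topeGraph.mp (hMf hb)]
  refine ⟨?_, fun i hi i' hi' h => ?_, ?_⟩
  · ext ⟨i, b⟩
    refine ⟨fun h => mem_image.mpr ⟨i, (hMIJ _ h).1, ?_⟩, fun h => ?_⟩
    · rw [mem_topeGraph.mp (hMf h)]
    · obtain ⟨i', hi', heq⟩ := mem_image.mp h
      exact heq ▸ hmem i' hi'
  · obtain ⟨a, -, ha⟩ := hright (f i) (hMIJ _ (hmem i hi)).2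
    exact (ha i (hmem i hi)).trans (ha i' (h ▸ hmem i' hi')).symm
  · ext b
    refine ⟨fun hb => ?_, fun hb => ?_⟩
    · obtain ⟨i, hi, rfl⟩ := mem_image.mp hb
      exact (hMIJ _ (hmem i hi)).2
    · obtain ⟨a, ha, -⟩ := hright b hb
      exact mem_image.mpr ⟨a, (hMIJ _ ha).1, mem_topeGraph.mp (hMf ha)⟩

end Topes

theorem statement1 {n d : ℕ} (T : (Fin d → ℕ) → Fin n → Fin d)
    (hpos : ∀ v : Fin d → ℕ, (∑ j, v j) = n → topePos (T v) = v)
    (hsector : ∀ (u : Fin d → ℕ) (j j' : Fin d), (∑ k, u k) + 1 = n →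
      ∀ i, T (u + unitVec j') i = j → T (u + unitVec j) i = j) :
    ∀ v v' : Fin d → ℕ, (∑ j, v j) = n → (∑ j, v' j) = n →
      Compatible (topeGraph (T v)) (topeGraph (T v')) := by
  have hT : IsPreTrianguloid (univ : Finset (Fin n)) T :=
    { card_filter := fun v hv => congrFun (hpos v (by rwa [card_fin] at hv))
      sector := fun u j j' hu i _ => by
        simpa only [unitVec_eq_single] using hsector u j j' (by rwa [card_fin] at hu) i }
  intro v v' hv hv' I J M M' hM hM' hMI hM'I
  obtain ⟨rfl, hinj, rfl⟩ := hMI.eq_image_of_subset_topeGraph hM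
  obtain ⟨rfl, hinj', himage⟩ := hM'I.eq_image_of_subset_topeGraph hM'
  have hagree := hT.eqOn_of_injOn (by rw [card_fin, hv]) (by rw [card_fin, hv']) (subset_univ I)
    hinj hinj' himage.symm
  exact image_congr fun i hi => Prod.ext rfl (hagree hi)
end

section
/- The reduction of every linkage pointed (n+d,d)-matching field is an (n,d)-matching left-semi-ensemble, and reduction is a bijection from the set of linkage pointed (n+d,d)-matching fields to the set of (n,d)-matching left-semi-ensembles. -/
/-!
On `σ = I ∪ {j̲ : j̄ ∉ J̄}` a pointed matching field is forced to match each `j̲` with `j̄`, so it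
is the reduced matching `M_{I,J̄}` plus these pointed edges. Hence reduction is injective, and
conversely every matching stack extends in this way to a pointed matching stack on `[n] ⊔ [d̲]`.

Closure of the reduction follows from its one-step case `M_{I∖i, J̄∖j̄} = M_{I,J̄} ∖ {i j̄}`: after
adding the edge `j̲ j̄`, both sides are perfect matchings of `σ ∪ {j̲} ∖ {i}` inside the linkage
tree of `σ ∪ {j̲}`, and a forest carries at most one perfect matching between given vertex sets
(two different ones would differ on a leafless subgraph).

For `|I| = |J̄| + 1` the linkage tree of `τ = I ∪ {j̲ : j̄ ∉ J̄}` is the left-linkage tree of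
`(I, J̄)` with a pendant path `i — j̄ — j̲` attached for every `j̄ ∉ J̄`, where `i` is the partner of
`j̄` in `M_{I, J̄ ∪ j̄}`. Adding pendant vertices preserves being a tree in both directions, and the
new right vertices have degree 2, so linkage of the field and left linkage of its reduction are
equivalent.
-/

open Finset

/-- A linkage pointed `(n+d, d)`-matching field (normalized). -/
structure PointedMF (n d : ℕ) where
  M : Finset (Fin n ⊕ Fin d) → BGraph (Fin n ⊕ Fin d) (Fin d)
  matching : ∀ σ, σ.card = d → IsMatching (M σ) σ Finset.univ
  junk : ∀ σ, σ.card ≠ d → M σ = ∅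
  pointed : ∀ σ, σ.card = d → ∀ j : Fin d, Sum.inr j ∈ σ → (Sum.inr j, j) ∈ M σ
  linkage : ∀ τ : Finset (Fin n ⊕ Fin d), τ.card = d + 1 →
    IsTreeOn (τ.biUnion fun x => M (τ.erase x)) τ Finset.univ ∧
      ∀ j : Fin d, RD (τ.biUnion fun x => M (τ.erase x)) j = 2

/-- An `(n,d)`-matching left-semi-ensemble (normalized). -/
structure LeftSemiEnsemble (n d : ℕ) where
  M : Finset (Fin n) → Finset (Fin d) → BGraph (Fin n) (Fin d)
  matching : ∀ I J, I.card = J.card → IsMatching (M I J) I J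
  junk : ∀ I J, I.card ≠ J.card → M I J = ∅
  closure : ∀ (I : Finset (Fin n)) (J : Finset (Fin d)) (I' : Finset (Fin n))
    (J' : Finset (Fin d)) (N : BGraph (Fin n) (Fin d)), I.card = J.card → I' ⊆ I → J' ⊆ J →
    N ⊆ M I J → IsMatching N I' J' → N = M I' J'
  leftLinkage : ∀ (I : Finset (Fin n)) (J : Finset (Fin d)), I.card = J.card + 1 →
    IsTreeOn (I.biUnion fun i => M (I.erase i) J) I J ∧
      ∀ j ∈ J, RD (I.biUnion fun i => M (I.erase i) J) j = 2

/-- The index set `σ = I ∪ {j̲ : j̄ ∉ J}` used in the reduction. -/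
def reduceSigma {n d : ℕ} (I : Finset (Fin n)) (J : Finset (Fin d)) :
    Finset (Fin n ⊕ Fin d) :=
  I.image Sum.inl ∪ Jᶜ.image Sum.inr


namespace SimpleGraph

variable {V : Type*} {G : SimpleGraph V} {u v w : V}

lemma eq_of_reachable_of_isolated (hv : ∀ z, ¬G.Adj v z) (h : G.Reachable v w) : v = w := by
  obtain ⟨p⟩ := h
  cases p with
  | nil => rfl
  | cons h _ => exact (hv _ h).elim

lemma reachable_sup_edge_iff_of_isolated (hv : ∀ z, ¬G.Adj v z) {x y : V} (hx : x ≠ v)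
    (hy : y ≠ v) : (G ⊔ edge v w).Reachable x y ↔ G.Reachable x y := by
  classical
  refine ⟨fun h => ?_, fun h => h.mono le_sup_left⟩
  -- Collapsing `v` onto `w` sends every edge of `G ⊔ edge v w` to an edge of `G` or a vertex.
  let r : V → V := fun z => if z = v then w else z
  rw [reachable_iff_reflTransGen] at h ⊢
  have hr : ∀ a b, (G ⊔ edge v w).Adj a b → Relation.ReflTransGen G.Adj (r a) (r b) := by
    rintro a b (hab | hab)
    · have ha : a ≠ v := fun ha => hv b (ha ▸ hab)
      have hb : b ≠ v := fun hb => hv a (hb ▸ hab.symm)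
      simpa [r, ha, hb] using Relation.ReflTransGen.single hab
    · obtain ⟨⟨rfl, rfl⟩ | ⟨rfl, rfl⟩, -⟩ := (edge_adj ..).1 hab <;>
        simpa [r] using Relation.ReflTransGen.refl
  simpa [Function.onFun, r, hx, hy] using h.lift' r hr

lemma isAcyclic_sup_edge_iff_of_isolated (hv : ∀ z, ¬G.Adj v z) (hvw : v ≠ w) :
    (G ⊔ edge v w).IsAcyclic ↔ G.IsAcyclic :=
  isAcyclic_add_edge_iff_of_not_reachable v w fun h => hvw (eq_of_reachable_of_isolated hv h)

lemma forall_reachable_sup_edge_iff_of_isolated {S S' : V → Prop} (hv : ∀ z, ¬G.Adj v z)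
    (hSv : ¬S v) (hSw : S w) (hS' : ∀ z, S' z ↔ z = v ∨ S z) :
    (∀ x y, S' x → S' y → (G ⊔ edge v w).Reachable x y) ↔
      ∀ x y, S x → S y → G.Reachable x y := by
  have hne : ∀ {z}, S z → z ≠ v := fun hz h => hSv (h ▸ hz)
  refine ⟨fun h x y hx hy => ?_, fun h x y hx hy => ?_⟩
  · exact (reachable_sup_edge_iff_of_isolated hv (hne hx) (hne hy)).1
      (h x y ((hS' x).2 (.inr hx)) ((hS' y).2 (.inr hy)))
  · have hvw : (G ⊔ edge v w).Reachable v w :=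
      (Adj.reachable (Or.inr ((edge_adj ..).2 ⟨.inl ⟨rfl, rfl⟩, fun h => hSv (h ▸ hSw)⟩)))
    have hreach : ∀ z, S' z → ∃ z', S z' ∧ (G ⊔ edge v w).Reachable z z' := by
      intro z hz
      rcases (hS' z).1 hz with rfl | hz
      · exact ⟨w, hSw, hvw⟩
      · exact ⟨z, hz, .rfl⟩
    obtain ⟨x', hx', hxx'⟩ := hreach x hx
    obtain ⟨y', hy', hyy'⟩ := hreach y hy
    exact hxx'.trans (((h x' y' hx' hy').mono le_sup_left).trans hyy'.symm)

lemma IsAcyclic.exists_leaf [Finite V] (hG : G.IsAcyclic) (h : G.Adj u v) :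
    ∃ x y, G.Adj x y ∧ ∀ z, G.Adj x z → z = y := by
  have := Fintype.ofFinite V
  by_contra! hleaf
  -- Without leaves every path can be prolonged at its start, so paths are arbitrarily long.
  have hpath : ∀ k : ℕ, ∃ (x y : V) (p : G.Walk x y), p.IsPath ∧ p.length = k + 1 := by
    intro k
    induction k with
    | zero => exact ⟨u, v, h.toWalk, Walk.IsPath.of_adj h, rfl⟩
    | succ k ih =>
      obtain ⟨x, y, p, hp, hlen⟩ := ih
      cases p with
      | nil => simp at hlen
      | @cons _ m _ hxm q =>
        obtain ⟨z, hxz, hzm⟩ := hleaf x m hxm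
        have hz : z ∉ (Walk.cons hxm q).support := fun hz =>
          hzm (by simpa using hG.eq_snd_of_adj_start hp hxz hz)
        exact ⟨z, y, .cons hxz.symm (.cons hxm q), hp.cons hz, by simp [hlen]⟩
  obtain ⟨x, y, p, hp, hlen⟩ := hpath (Fintype.card V)
  have := hp.length_lt
  omega

end SimpleGraph

section Bipartite

open SimpleGraph Sum

variable {α β : Type*} {U W : BGraph α β} {I : Finset α} {J : Finset β} {a : α} {b : β}

@[simp] lemma toGraph_adj_inl_inr {a' : α} {b' : β} :
    (toGraph U).Adj (inl a') (inr b') ↔ (a', b') ∈ U := by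
  simp [toGraph]

@[simp] lemma toGraph_adj_inr_inl {a' : α} {b' : β} :
    (toGraph U).Adj (inr b') (inl a') ↔ (a', b') ∈ U := by
  simp [toGraph]

@[simp] lemma not_toGraph_adj_inl_inl {a' a'' : α} : ¬(toGraph U).Adj (inl a') (inl a'') := by
  simp [toGraph]

@[simp] lemma not_toGraph_adj_inr_inr {b' b'' : β} : ¬(toGraph U).Adj (inr b') (inr b'') := by
  simp [toGraph]

lemma toGraph_mono (h : U ⊆ W) : toGraph U ≤ toGraph W := by
  rintro (a' | b') (a'' | b'') <;> simp <;> exact @h _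

lemma Acyclic.anti (h : U ⊆ W) (hW : Acyclic W) : Acyclic U :=
  IsAcyclic.anti (toGraph_mono h) hW

variable [DecidableEq α] [DecidableEq β]

lemma toGraph_insert : toGraph (insert (a, b) U) = toGraph U ⊔ edge (inl a) (inr b) := by
  ext (a' | b') (a'' | b'') <;> simp [edge_adj] <;> tauto

lemma toGraph_erase : toGraph (U.erase (a, b)) = (toGraph U).deleteEdges {s(inl a, inr b)} := by
  ext (a' | b') (a'' | b'') <;> simp <;> tauto

lemma acyclic_iff_forall_not_reachable_erase :
    Acyclic U ↔ ∀ a b, (a, b) ∈ U → ¬(toGraph (U.erase (a, b))).Reachable (inl a) (inr b) := by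
  simp only [Acyclic, isAcyclic_iff_forall_adj_isBridge, isBridge_iff, toGraph_erase]
  refine ⟨fun h a b hab => h ((toGraph_adj_inl_inr).2 hab), ?_⟩
  rintro h (a' | b') (a'' | b'') hadj
  · simp at hadj
  · exact h a' b'' (toGraph_adj_inl_inr.1 hadj)
  · rw [Sym2.eq_swap, reachable_comm]
    exact h a'' b' (toGraph_adj_inr_inl.1 hadj)
  · simp at hadj

lemma isTreeOn_insert_right (hU : ∀ e ∈ U, e.1 ∈ I ∧ e.2 ∈ J) (ha : a ∈ I) (hb : b ∉ J) :
    IsTreeOn (insert (a, b) U) I (insert b J) ↔ IsTreeOn U I J := by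
  have hv : ∀ z, ¬(toGraph U).Adj (inr b) z := by
    rintro (a' | b') h
    exacts [hb (hU _ (toGraph_adj_inr_inl.1 h)).2, not_toGraph_adj_inr_inr h]
  have hedges : ∀ e ∈ insert (a, b) U, e.1 ∈ I ∧ e.2 ∈ insert b J := by
    rintro e he
    rcases Finset.mem_insert.1 he with rfl | he
    exacts [⟨ha, Finset.mem_insert_self ..⟩, ⟨(hU e he).1, Finset.mem_insert_of_mem (hU e he).2⟩]
  rw [IsTreeOn, IsTreeOn, Acyclic, Acyclic, toGraph_insert, edge_comm,
    isAcyclic_sup_edge_iff_of_isolated hv (by simp),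
    forall_reachable_sup_edge_iff_of_isolated (S := Sum.elim (· ∈ I) (· ∈ J)) hv
      (by simpa using hb) (by simpa using ha)
      (by rintro (a' | b') <;> simp)]
  exact and_congr_left fun _ => iff_of_true hedges hU

lemma isTreeOn_insert_left (hU : ∀ e ∈ U, e.1 ∈ I ∧ e.2 ∈ J) (ha : a ∉ I) (hb : b ∈ J) :
    IsTreeOn (insert (a, b) U) (insert a I) J ↔ IsTreeOn U I J := by
  have hv : ∀ z, ¬(toGraph U).Adj (inl a) z := by
    rintro (a' | b') h
    exacts [not_toGraph_adj_inl_inl h, ha (hU _ (toGraph_adj_inl_inr.1 h)).1]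
  have hedges : ∀ e ∈ insert (a, b) U, e.1 ∈ insert a I ∧ e.2 ∈ J := by
    rintro e he
    rcases Finset.mem_insert.1 he with rfl | he
    exacts [⟨Finset.mem_insert_self .., hb⟩, ⟨Finset.mem_insert_of_mem (hU e he).1, (hU e he).2⟩]
  rw [IsTreeOn, IsTreeOn, Acyclic, Acyclic, toGraph_insert,
    isAcyclic_sup_edge_iff_of_isolated hv (by simp),
    forall_reachable_sup_edge_iff_of_isolated (S := Sum.elim (· ∈ I) (· ∈ J)) hv
      (by simpa using ha) (by simpa using hb)
      (by rintro (a' | b') <;> simp)]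
  exact and_congr_left fun _ => iff_of_true hedges hU

end Bipartite

namespace IsMatching

open SimpleGraph Sum

variable {α β : Type*} {M M' : BGraph α β} {S : Finset α} {T : Finset β} {a a' : α} {b b' : β}

lemma left_unique (hM : IsMatching M S T) (h : (a, b) ∈ M) (h' : (a, b') ∈ M) : b = b' :=
  (hM.2.1 a (hM.1 _ h).1).unique h h'

lemma right_unique (hM : IsMatching M S T) (h : (a, b) ∈ M) (h' : (a', b) ∈ M) : a = a' :=
  (hM.2.2 b (hM.1 _ h).2).unique h h'

lemma card_eq (hM : IsMatching M S T) : S.card = T.card := by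
  have hS : M.card = S.card := by
    refine Finset.card_bij (fun e _ => e.1) (fun e he => (hM.1 e he).1) ?_ fun a ha => ?_
    · rintro ⟨a, b⟩ h ⟨a', b'⟩ h' (rfl : a = a')
      rw [hM.left_unique h h']
    · obtain ⟨b, hb, -⟩ := hM.2.1 a ha
      exact ⟨(a, b), hb, rfl⟩
  have hT : M.card = T.card := by
    refine Finset.card_bij (fun e _ => e.2) (fun e he => (hM.1 e he).2) ?_ fun b hb => ?_
    · rintro ⟨a, b⟩ h ⟨a', b'⟩ h' (rfl : b = b')
      rw [hM.right_unique h h']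
    · obtain ⟨a, ha, -⟩ := hM.2.2 b hb
      exact ⟨(a, b), ha, rfl⟩
  rw [← hS, hT]

lemma eq_of_subset (hM : IsMatching M S T) (hM' : IsMatching M' S T) (h : M ⊆ M') : M = M' := by
  refine h.antisymm fun ⟨a, b⟩ hab => ?_
  obtain ⟨b', hb', -⟩ := hM.2.1 a (hM'.1 _ hab).1
  rwa [hM'.left_unique hab (h hb')]

lemma exists_ne_of_mem_of_notMem (hM : IsMatching M S T) (hM' : IsMatching M' S T) (h : (a, b) ∈ M)
    (h' : (a, b) ∉ M') :
    (∃ b', b' ≠ b ∧ (a, b') ∈ M' ∧ (a, b') ∉ M) ∧ ∃ a', a' ≠ a ∧ (a', b) ∈ M' ∧ (a', b) ∉ M := by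
  obtain ⟨b', hb', -⟩ := hM'.2.1 a (hM.1 _ h).1
  obtain ⟨a', ha', -⟩ := hM'.2.2 b (hM.1 _ h).2
  refine ⟨⟨b', ?_, hb', fun hb'M => ?_⟩, ⟨a', ?_, ha', fun ha'M => ?_⟩⟩
  · rintro rfl; exact h' hb'
  · exact h' (hM.left_unique h hb'M ▸ hb')
  · rintro rfl; exact h' ha'
  · exact h' (hM.right_unique h ha'M ▸ ha')

variable [DecidableEq α] [DecidableEq β]

lemma erase (hM : IsMatching M S T) (hab : (a, b) ∈ M) :
    IsMatching (M.erase (a, b)) (S.erase a) (T.erase b) := by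
  refine ⟨fun ⟨a', b'⟩ he => ?_, fun a' ha' => ?_, fun b' hb' => ?_⟩
  · obtain ⟨hne, heM⟩ := Finset.mem_erase.1 he
    refine ⟨Finset.mem_erase.2 ⟨?_, (hM.1 _ heM).1⟩, Finset.mem_erase.2 ⟨?_, (hM.1 _ heM).2⟩⟩
    · rintro (rfl : a' = a)
      exact hne (by rw [hM.left_unique heM hab])
    · rintro (rfl : b' = b)
      exact hne (by rw [hM.right_unique heM hab])
  · obtain ⟨hne, ha'⟩ := Finset.mem_erase.1 ha'
    obtain ⟨b', hb', huniq⟩ := hM.2.1 a' ha'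
    exact ⟨b', Finset.mem_erase.2 ⟨by simp [hne], hb'⟩,
      fun y hy => huniq y (Finset.mem_of_mem_erase hy)⟩
  · obtain ⟨hne, hb'⟩ := Finset.mem_erase.1 hb'
    obtain ⟨a', ha', huniq⟩ := hM.2.2 b' hb'
    exact ⟨a', Finset.mem_erase.2 ⟨by simp [hne], ha'⟩,
      fun y hy => huniq y (Finset.mem_of_mem_erase hy)⟩

lemma insert (hM : IsMatching M S T) (ha : a ∉ S) (hb : b ∉ T) :
    IsMatching (insert (a, b) M) (insert a S) (insert b T) := by
  refine ⟨fun e he => ?_, fun a' ha' => ?_, fun b' hb' => ?_⟩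
  · rcases Finset.mem_insert.1 he with rfl | he
    exacts [⟨Finset.mem_insert_self .., Finset.mem_insert_self ..⟩,
      ⟨Finset.mem_insert_of_mem (hM.1 e he).1, Finset.mem_insert_of_mem (hM.1 e he).2⟩]
  · rcases Finset.mem_insert.1 ha' with rfl | ha'
    · refine ⟨b, Finset.mem_insert_self .., fun y hy => ?_⟩
      rcases Finset.mem_insert.1 hy with h | hy
      exacts [(Prod.mk.inj h).2, absurd (hM.1 _ hy).1 ha]
    · obtain ⟨b', hb', huniq⟩ := hM.2.1 a' ha'
      refine ⟨b', Finset.mem_insert_of_mem hb', fun y hy => ?_⟩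
      rcases Finset.mem_insert.1 hy with h | hy
      exacts [absurd ((Prod.mk.inj h).1 ▸ ha') ha, huniq y hy]
  · rcases Finset.mem_insert.1 hb' with rfl | hb'
    · refine ⟨a, Finset.mem_insert_self .., fun y hy => ?_⟩
      rcases Finset.mem_insert.1 hy with h | hy
      exacts [(Prod.mk.inj h).1, absurd (hM.1 _ hy).2 hb]
    · obtain ⟨a', ha', huniq⟩ := hM.2.2 b' hb'
      refine ⟨a', Finset.mem_insert_of_mem ha', fun y hy => ?_⟩
      rcases Finset.mem_insert.1 hy with h | hy
      exacts [absurd ((Prod.mk.inj h).2 ▸ hb') hb, huniq y hy]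

lemma eq_of_subset_acyclic [Finite α] [Finite β] {U : BGraph α β} (hU : Acyclic U)
    (hMU : M ⊆ U) (hM'U : M' ⊆ U) (hM : IsMatching M S T) (hM' : IsMatching M' S T) :
    M = M' := by
  -- The edges on which `M` and `M'` differ form a leafless subgraph of the forest `U`.
  set D := M \ M' ∪ M' \ M with hD
  have hleafless : ∀ x y, (toGraph D).Adj x y → ∃ z, (toGraph D).Adj x z ∧ z ≠ y := by
    rintro (a | b) (a' | b') hxy <;> simp only [toGraph_adj_inl_inr, toGraph_adj_inr_inl,
      not_toGraph_adj_inl_inl, not_toGraph_adj_inr_inr, hD, Finset.mem_union,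
      Finset.mem_sdiff] at hxy ⊢
    · rcases hxy with ⟨h, h'⟩ | ⟨h, h'⟩
      · obtain ⟨⟨b, hne, hb⟩, -⟩ := hM.exists_ne_of_mem_of_notMem hM' h h'
        exact ⟨inr b, by simpa [D] using Or.inr hb, by simpa using hne⟩
      · obtain ⟨⟨b, hne, hb⟩, -⟩ := hM'.exists_ne_of_mem_of_notMem hM h h'
        exact ⟨inr b, by simpa [D] using Or.inl hb, by simpa using hne⟩
    · rcases hxy with ⟨h, h'⟩ | ⟨h, h'⟩
      · obtain ⟨-, a, hne, ha⟩ := hM.exists_ne_of_mem_of_notMem hM' h h'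
        exact ⟨inl a, by simpa [D] using Or.inr ha, by simpa using hne⟩
      · obtain ⟨-, a, hne, ha⟩ := hM'.exists_ne_of_mem_of_notMem hM h h'
        exact ⟨inl a, by simpa [D] using Or.inl ha, by simpa using hne⟩
  have hDU : D ⊆ U := Finset.union_subset (Finset.sdiff_subset.trans hMU)
    (Finset.sdiff_subset.trans hM'U)
  have hDempty : ∀ a b, (a, b) ∉ D := fun a b hab => by
    obtain ⟨x, y, hxy, hleaf⟩ := (hU.anti hDU).exists_leaf (toGraph_adj_inl_inr.2 hab)
    obtain ⟨z, hxz, hzy⟩ := hleafless x y hxy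
    exact hzy (hleaf z hxz)
  ext ⟨a, b⟩
  have := hDempty a b
  simp only [hD, Finset.mem_union, Finset.mem_sdiff] at this
  tauto

end IsMatching

section MapLeft

open SimpleGraph Sum

variable {α α' β : Type*} {f : α ↪ α'} {U : BGraph α β} {I : Finset α} {J : Finset β}

def mapLeft (f : α ↪ α') (U : BGraph α β) : BGraph α' β :=
  U.map (f.prodMap (Function.Embedding.refl β))

lemma mem_mapLeft {a' : α'} {b : β} : (a', b) ∈ mapLeft f U ↔ ∃ a, (a, b) ∈ U ∧ f a = a' := by
  simp [mapLeft]

@[simp] lemma mk_mem_mapLeft {a : α} {b : β} : (f a, b) ∈ mapLeft f U ↔ (a, b) ∈ U := by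
  simp [mapLeft]

lemma toGraph_mapLeft_adj_iff {x' y' : α' ⊕ β} : (toGraph (mapLeft f U)).Adj x' y' ↔
    ∃ x y, (toGraph U).Adj x y ∧ Sum.map f id x = x' ∧ Sum.map f id y = y' := by
  constructor
  · rcases x' with a' | b <;> rcases y' with a'' | b' <;>
      simp only [toGraph_adj_inl_inr, toGraph_adj_inr_inl, not_toGraph_adj_inl_inl,
        not_toGraph_adj_inr_inr, mem_mapLeft, IsEmpty.forall_iff]
    · rintro ⟨a, hab, rfl⟩
      exact ⟨inl a, inr b', toGraph_adj_inl_inr.2 hab, rfl, rfl⟩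
    · rintro ⟨a, hab, rfl⟩
      exact ⟨inr b, inl a, toGraph_adj_inr_inl.2 hab, rfl, rfl⟩
  · rintro ⟨(a | b), (a' | b'), h, rfl, rfl⟩ <;> simp at h ⊢ <;> exact h

lemma reachable_mapLeft_iff {x y : α ⊕ β} :
    (toGraph (mapLeft f U)).Reachable (Sum.map f id x) (Sum.map f id y) ↔
      (toGraph U).Reachable x y := by
  have hinj : Function.Injective (Sum.map f (id : β → β)) :=
    Sum.map_injective.2 ⟨f.injective, Function.injective_id⟩
  let push : toGraph U →g toGraph (mapLeft f U) :=
    ⟨Sum.map f id, fun h => toGraph_mapLeft_adj_iff.2 ⟨_, _, h, rfl, rfl⟩⟩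
  have : Nonempty (α ⊕ β) := ⟨x⟩
  let pull : toGraph (mapLeft f U) →g toGraph U :=
    ⟨Function.invFun (Sum.map f id), fun h => by
      obtain ⟨x, y, hxy, rfl, rfl⟩ := toGraph_mapLeft_adj_iff.1 h
      simpa [Function.leftInverse_invFun hinj _] using hxy⟩
  refine ⟨fun h => ?_, fun h => h.map push⟩
  simpa [pull, Function.leftInverse_invFun hinj _] using h.map pull

@[simp] lemma inl_mem_mapLeft_inl {γ : Type*} {U : BGraph α β} {a : α} {b : β} :
    (Sum.inl a, b) ∈ mapLeft (.inl : α ↪ α ⊕ γ) U ↔ (a, b) ∈ U :=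
  mk_mem_mapLeft

@[simp] lemma inr_notMem_mapLeft_inl {γ : Type*} {U : BGraph α β} {c : γ} {b : β} :
    (Sum.inr c, b) ∉ mapLeft (.inl : α ↪ α ⊕ γ) U := by
  simp [mem_mapLeft]

variable [DecidableEq β]

lemma RD_mapLeft (b : β) : RD (mapLeft f U) b = RD U b := by
  rw [RD, RD, mapLeft, Finset.filter_map, Finset.card_map]
  rfl

variable [DecidableEq α] [DecidableEq α']

lemma mapLeft_erase (a : α) (b : β) : mapLeft f (U.erase (a, b)) = (mapLeft f U).erase (f a, b) :=
  Finset.map_erase ..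

lemma acyclic_mapLeft_iff : Acyclic (mapLeft f U) ↔ Acyclic U := by
  simp only [acyclic_iff_forall_not_reachable_erase, mem_mapLeft, forall_exists_index, and_imp]
  refine ⟨fun h a b hab => ?_, ?_⟩
  · have := h (f a) b a hab rfl
    rw [← mapLeft_erase] at this
    exact fun hr => this (reachable_mapLeft_iff (x := inl a) (y := inr b) |>.2 hr)
  · rintro h _ b a hab rfl
    rw [← mapLeft_erase]
    exact fun hr => h a b hab (reachable_mapLeft_iff (x := inl a) (y := inr b) |>.1 hr)

lemma isTreeOn_mapLeft_iff : IsTreeOn (mapLeft f U) (I.map f) J ↔ IsTreeOn U I J := by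
  have hverts : ∀ x', Sum.elim (· ∈ I.map f) (· ∈ J) x' ↔
      ∃ x, Sum.elim (· ∈ I) (· ∈ J) x ∧ Sum.map f id x = x' := by
    rintro (a' | b) <;> simp
  refine and_congr ?_ (and_congr acyclic_mapLeft_iff ?_)
  · simp only [mapLeft, Finset.forall_mem_map]
    simp
  · refine ⟨fun h x y hx hy => ?_, fun h x' y' hx' hy' => ?_⟩
    · exact reachable_mapLeft_iff.1 (h _ _ ((hverts _).2 ⟨x, hx, rfl⟩) ((hverts _).2 ⟨y, hy, rfl⟩))
    · obtain ⟨x, hx, rfl⟩ := (hverts x').1 hx'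
      obtain ⟨y, hy, rfl⟩ := (hverts y').1 hy'
      exact reachable_mapLeft_iff.2 (h x y hx hy)

end MapLeft

section Pendants

variable {α β : Type*} [DecidableEq α] [DecidableEq β] {U : BGraph α β} {I : Finset α}
  {J : Finset β} {A P : β → α} {B : Finset β}

lemma forall_mem_union_pendants (hU : ∀ e ∈ U, e.1 ∈ I ∧ e.2 ∈ J) (hA : ∀ b ∈ B, A b ∈ I) :
    ∀ e ∈ U ∪ B.image (fun b => (A b, b)) ∪ B.image (fun b => (P b, b)),
      e.1 ∈ I ∪ B.image P ∧ e.2 ∈ J ∪ B := by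
  simp only [Finset.mem_union, Finset.mem_image]
  rintro _ ((he | ⟨c, hc, rfl⟩) | ⟨c, hc, rfl⟩)
  exacts [⟨.inl (hU _ he).1, .inl (hU _ he).2⟩, ⟨.inl (hA c hc), .inr hc⟩,
    ⟨.inr ⟨c, hc, rfl⟩, .inr hc⟩]

lemma isTreeOn_union_pendants (hU : ∀ e ∈ U, e.1 ∈ I ∧ e.2 ∈ J) (hBJ : Disjoint B J)
    (hA : ∀ b ∈ B, A b ∈ I) (hP : ∀ b ∈ B, P b ∉ I) (hPinj : Set.InjOn P B) :
    IsTreeOn (U ∪ B.image (fun b => (A b, b)) ∪ B.image (fun b => (P b, b))) (I ∪ B.image P)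
      (J ∪ B) ↔ IsTreeOn U I J := by
  induction B using Finset.induction_on with
  | empty => simp
  | insert b B hbB ih =>
    simp only [Finset.mem_insert, forall_eq_or_imp] at hA hP
    rw [Finset.disjoint_insert_left] at hBJ
    rw [Finset.coe_insert, Set.injOn_insert hbB] at hPinj
    set U' := U ∪ B.image (fun b => (A b, b)) ∪ B.image (fun b => (P b, b))
    have hU' := forall_mem_union_pendants (P := P) hU hA.2
    have hU'A : ∀ e ∈ insert (A b, b) U', e.1 ∈ I ∪ B.image P ∧ e.2 ∈ insert b (J ∪ B) := by
      rintro e he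
      rcases Finset.mem_insert.1 he with rfl | he
      exacts [⟨Finset.mem_union_left _ hA.1, Finset.mem_insert_self ..⟩,
        ⟨(hU' e he).1, Finset.mem_insert_of_mem (hU' e he).2⟩]
    have hPb : P b ∉ I ∪ B.image P := by
      simp only [Finset.mem_union, Finset.mem_image, not_or, not_exists, not_and]
      exact ⟨hP.1, fun c hc hcb => hPinj.2 ⟨c, hc, hcb⟩⟩
    have hb : b ∉ J ∪ B := by simp [hBJ.1, hbB]
    have hgraph : U ∪ (insert b B).image (fun b => (A b, b)) ∪
        (insert b B).image (fun b => (P b, b)) = insert (P b, b) (insert (A b, b) U') := by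
      ext e
      simp only [U', Finset.image_insert, Finset.mem_union, Finset.mem_insert]
      tauto
    have hI : I ∪ (insert b B).image P = insert (P b) (I ∪ B.image P) := by
      rw [Finset.image_insert, Finset.union_insert]
    rw [hgraph, hI, Finset.union_insert,
      isTreeOn_insert_left hU'A hPb (Finset.mem_insert_self ..),
      isTreeOn_insert_right hU' (Finset.mem_union_left _ hA.1) hb]
    exact ih hBJ.2 hA.2 hP.2 hPinj.1

lemma RD_union_pendants (hU : ∀ e ∈ U, e.2 ∈ J) (hBJ : Disjoint B J) (hAP : ∀ b ∈ B, A b ≠ P b)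
    (j : β) : RD (U ∪ B.image (fun b => (A b, b)) ∪ B.image (fun b => (P b, b))) j =
      if j ∈ B then 2 else RD U j := by
  rw [RD, RD, Finset.filter_union, Finset.filter_union, Finset.filter_image, Finset.filter_image]
  split_ifs with hj
  · have hUj : U.filter (fun e => e.2 = j) = ∅ :=
      Finset.filter_eq_empty_iff.2 fun e he hej => Finset.disjoint_right.1 hBJ (hU e he) (hej ▸ hj)
    simp [hUj, Finset.filter_eq', hj, hAP j hj]
  · simp [Finset.filter_eq', hj]

end Pendants

section Stacks

variable {α β : Type*} [DecidableEq α] [DecidableEq β]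

def IsMatchingStack (N : Finset α → Finset β → BGraph α β) : Prop :=
  ∀ I J, I.card = J.card → IsMatching (N I J) I J

/-- The one-step form of the closure axiom. -/
def ErasureClosed (N : Finset α → Finset β → BGraph α β) : Prop :=
  ∀ I J i j, I.card = J.card → (i, j) ∈ N I J → N (I.erase i) (J.erase j) = (N I J).erase (i, j)

variable {N : Finset α → Finset β → BGraph α β}

lemma ErasureClosed.closure (hN : IsMatchingStack N) (hE : ErasureClosed N)
    {I I' : Finset α} {J J' : Finset β} {M : BGraph α β} (hIJ : I.card = J.card) (hI' : I' ⊆ I)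
    (hJ' : J' ⊆ J) (hM : M ⊆ N I J) (hMm : IsMatching M I' J') : M = N I' J' := by
  induction I using Finset.strongInduction generalizing J with
  | H I ih =>
  by_cases hII' : I ⊆ I'
  · obtain rfl := hI'.antisymm hII'
    obtain rfl : J' = J := Finset.eq_of_subset_of_card_le hJ' (by rw [← hMm.card_eq, hIJ])
    exact hMm.eq_of_subset (hN _ _ hIJ) hM
  · -- Erase a vertex `i ∉ I'` together with its partner `j`, which `M` cannot use either.
    obtain ⟨i, hiI, hiI'⟩ := Finset.not_subset.1 hII'
    obtain ⟨j, hij, -⟩ := (hN I J hIJ).2.1 i hiI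
    have hjJ : j ∈ J := ((hN I J hIJ).1 _ hij).2
    have hjJ' : j ∉ J' := fun hjJ' => by
      obtain ⟨a, ha, -⟩ := hMm.2.2 j hjJ'
      exact hiI' ((hN I J hIJ).right_unique (hM ha) hij ▸ (hMm.1 _ ha).1)
    refine ih (I.erase i) (Finset.erase_ssubset hiI) (J := J.erase j) ?_
      (fun x hx => Finset.mem_erase.2 ⟨fun h => hiI' (h ▸ hx), hI' hx⟩)
      (fun x hx => Finset.mem_erase.2 ⟨fun h => hjJ' (h ▸ hx), hJ' hx⟩) ?_
    · rw [Finset.card_erase_of_mem hiI, Finset.card_erase_of_mem hjJ, hIJ]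
    · rw [hE I J i j hIJ hij]
      exact fun e he => Finset.mem_erase.2 ⟨by rintro rfl; exact hiI' (hMm.1 _ he).1, hM he⟩

end Stacks

lemma LeftSemiEnsemble.isMatchingStack {n d : ℕ} (L : LeftSemiEnsemble n d) :
    IsMatchingStack L.M :=
  L.matching

lemma LeftSemiEnsemble.erasureClosed {n d : ℕ} (L : LeftSemiEnsemble n d) :
    ErasureClosed L.M := fun I J _ _ hIJ hij =>
  (L.closure I J _ _ _ hIJ (Finset.erase_subset ..) (Finset.erase_subset ..)
    (Finset.erase_subset ..) ((L.matching I J hIJ).erase hij)).symm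

section Reduction

open Sum

variable {n d : ℕ} {I : Finset (Fin n)} {J : Finset (Fin d)} {i : Fin n} {j : Fin d}

@[simp] lemma inl_mem_reduceSigma : inl i ∈ reduceSigma I J ↔ i ∈ I := by
  simp [reduceSigma]

@[simp] lemma inr_mem_reduceSigma : inr j ∈ reduceSigma I J ↔ j ∉ J := by
  simp [reduceSigma]

lemma reduceSigma_toLeft_toRight (σ : Finset (Fin n ⊕ Fin d)) :
    reduceSigma σ.toLeft σ.toRightᶜ = σ := by
  ext (i | j) <;> simp

lemma card_reduceSigma (I : Finset (Fin n)) (J : Finset (Fin d)) :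
    (reduceSigma I J).card = I.card + (d - J.card) := by
  have h : reduceSigma I J = I.disjSum Jᶜ := by ext (i | j) <;> simp
  rw [h, Finset.card_disjSum, Finset.card_compl, Fintype.card_fin]

lemma card_reduceSigma_eq_iff : (reduceSigma I J).card = d ↔ I.card = J.card := by
  have := J.card_le_univ.trans_eq (Fintype.card_fin d)
  rw [card_reduceSigma]
  omega

lemma card_reduceSigma_eq_succ_iff : (reduceSigma I J).card = d + 1 ↔ I.card = J.card + 1 := by
  have := J.card_le_univ.trans_eq (Fintype.card_fin d)
  rw [card_reduceSigma]
  omega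

lemma exists_mem_reduceSigma {p : Fin n ⊕ Fin d → Prop} :
    (∃ x ∈ reduceSigma I J, p x) ↔ (∃ i ∈ I, p (inl i)) ∨ ∃ b ∉ J, p (inr b) := by
  simp [reduceSigma, or_and_right, exists_or]

lemma reduceSigma_erase_inl (I : Finset (Fin n)) (J : Finset (Fin d)) (i : Fin n) :
    (reduceSigma I J).erase (inl i) = reduceSigma (I.erase i) J := by
  ext (i' | j') <;> simp

lemma reduceSigma_erase_inr (I : Finset (Fin n)) (J : Finset (Fin d)) (j : Fin d) :
    (reduceSigma I J).erase (inr j) = reduceSigma I (insert j J) := by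
  ext (i' | j') <;> simp

lemma reduceSigma_insert_inr_erase_inl (I : Finset (Fin n)) (J : Finset (Fin d)) (i : Fin n)
    (j : Fin d) :
    (insert (inr j) (reduceSigma I J)).erase (inl i) = reduceSigma (I.erase i) (J.erase j) := by
  ext (i' | j') <;> simp [or_iff_not_imp_left]

/-- `W` together with the edges `k̲ k̄`, `k ∈ K`, where `inr k` stands for `k̲`. -/
def pointedExtend (W : BGraph (Fin n) (Fin d)) (K : Finset (Fin d)) :
    BGraph (Fin n ⊕ Fin d) (Fin d) :=
  mapLeft .inl W ∪ K.image fun k => (inr k, k)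

variable {W : BGraph (Fin n) (Fin d)} {K : Finset (Fin d)}

@[simp] lemma inl_mem_pointedExtend : (inl i, j) ∈ pointedExtend W K ↔ (i, j) ∈ W := by
  simp [pointedExtend]

@[simp] lemma inr_mem_pointedExtend {k : Fin d} :
    (inr k, j) ∈ pointedExtend W K ↔ k = j ∧ j ∈ K := by
  simp [pointedExtend, and_comm, eq_comm]

lemma isMatching_pointedExtend_iff :
    IsMatching (pointedExtend W Jᶜ) (reduceSigma I J) Finset.univ ↔ IsMatching W I J := by
  constructor
  · intro hE
    refine ⟨fun ⟨i, j⟩ hij => ⟨?_, ?_⟩, fun i hi => ?_, fun j hj => ?_⟩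
    · simpa using (hE.1 (inl i, j) (by simpa)).1
    · by_contra hj
      exact inl_ne_inr (hE.right_unique (b := j) (by simpa) (by simpa : (inr j, j) ∈ _))
    · simpa using hE.2.1 (inl i) (by simpa)
    · obtain ⟨x, hx, huniq⟩ := hE.2.2 j (Finset.mem_univ j)
      rcases x with i | k
      · exact ⟨i, by simpa using hx, fun i' h => inl_injective (huniq _ (by simpa))⟩
      · simp only [inr_mem_pointedExtend, Finset.mem_compl] at hx
        exact (hx.2 hj).elim
  · intro hW
    refine ⟨fun ⟨x, j⟩ he => ?_, fun x hx => ?_, fun j _ => ?_⟩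
    · rcases x with i | k
      · simpa using (hW.1 _ (by simpa using he)).1
      · simp only [inr_mem_pointedExtend, Finset.mem_compl] at he
        simpa [he.1] using he.2
    · rcases x with i | k
      · simpa using hW.2.1 i (by simpa using hx)
      · refine ⟨k, by simpa using hx, fun j h => ?_⟩
        simp only [inr_mem_pointedExtend] at h
        exact h.1.symm
    · by_cases hj : j ∈ J
      · obtain ⟨i, hi, huniq⟩ := hW.2.2 j hj
        refine ⟨inl i, by simpa, fun y hy => ?_⟩
        rcases y with i' | k
        · exact congrArg inl (huniq i' (by simpa using hy))
        · simp only [inr_mem_pointedExtend, Finset.mem_compl] at hy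
          exact (hy.2 hj).elim
      · refine ⟨inr j, by simpa, fun y hy => ?_⟩
        rcases y with i' | k
        · exact (hj (hW.1 _ (by simpa using hy)).2).elim
        · simp only [inr_mem_pointedExtend] at hy
          rw [hy.1]

def unreduce (N : Finset (Fin n) → Finset (Fin d) → BGraph (Fin n) (Fin d))
    (σ : Finset (Fin n ⊕ Fin d)) : BGraph (Fin n ⊕ Fin d) (Fin d) :=
  if σ.card = d then pointedExtend (N σ.toLeft σ.toRightᶜ) σ.toRight else ∅

lemma unreduce_reduceSigma (N : Finset (Fin n) → Finset (Fin d) → BGraph (Fin n) (Fin d))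
    (h : I.card = J.card) : unreduce N (reduceSigma I J) = pointedExtend (N I J) Jᶜ := by
  rw [unreduce, if_pos (card_reduceSigma_eq_iff.2 h)]
  congr <;> ext <;> simp

end Reduction

namespace PointedMF

open Sum

variable {n d : ℕ} (F : PointedMF n d)

def reducedStack (I : Finset (Fin n)) (J : Finset (Fin d)) : BGraph (Fin n) (Fin d) :=
  Finset.univ.filter fun e : Fin n × Fin d => (inl e.1, e.2) ∈ F.M (reduceSigma I J)

variable {F}

@[simp] lemma mem_reducedStack {I : Finset (Fin n)} {J : Finset (Fin d)} {i : Fin n} {j : Fin d} :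
    (i, j) ∈ F.reducedStack I J ↔ (inl i, j) ∈ F.M (reduceSigma I J) := by
  simp [reducedStack]

lemma M_eq_pointedExtend {σ : Finset (Fin n ⊕ Fin d)} (hσ : σ.card = d) :
    F.M σ = pointedExtend (F.reducedStack σ.toLeft σ.toRightᶜ) σ.toRight := by
  ext ⟨i | k, j⟩
  · simp [reduceSigma_toLeft_toRight]
  · simp only [inr_mem_pointedExtend, Finset.mem_toRight]
    refine ⟨fun h => ?_, fun ⟨rfl, hk⟩ => F.pointed σ hσ _ hk⟩
    have hk : inr k ∈ σ := ((F.matching σ hσ).1 _ h).1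
    obtain rfl := (F.matching σ hσ).left_unique (F.pointed σ hσ k hk) h
    exact ⟨rfl, hk⟩

lemma M_eq_unreduce : F.M = unreduce F.reducedStack := by
  funext σ
  by_cases hσ : σ.card = d
  · rw [unreduce, if_pos hσ, M_eq_pointedExtend hσ]
  · rw [unreduce, if_neg hσ, F.junk σ hσ]

lemma reducedStack_isMatchingStack : IsMatchingStack F.reducedStack := fun I J hIJ => by
  have h := F.matching _ (card_reduceSigma_eq_iff.2 hIJ)
  rwa [M_eq_unreduce, unreduce_reduceSigma _ hIJ, isMatching_pointedExtend_iff] at h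

/-- Both sides are perfect matchings of `τ.erase x` inside the linkage tree of `τ = insert y σ`. -/
lemma M_exchange {σ : Finset (Fin n ⊕ Fin d)} (hσ : σ.card = d) {x y : Fin n ⊕ Fin d}
    (hx : x ∈ σ) (hy : y ∉ σ) {j : Fin d} (hxj : (x, j) ∈ F.M σ)
    (hyj : (y, j) ∈ F.M ((insert y σ).erase x)) :
    F.M ((insert y σ).erase x) = insert (y, j) ((F.M σ).erase (x, j)) := by
  set τ := insert y σ
  have hτ : τ.card = d + 1 := by rw [Finset.card_insert_of_notMem hy, hσ]
  have hxτ : x ∈ τ := Finset.mem_insert_of_mem hx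
  have hxy : x ≠ y := fun h => hy (h ▸ hx)
  have hsub : ∀ z ∈ τ, F.M (τ.erase z) ⊆ τ.biUnion fun z => F.M (τ.erase z) :=
    fun z hz => Finset.subset_biUnion_of_mem (fun z => F.M (τ.erase z)) hz
  have hτx : (τ.erase x).card = d := by rw [Finset.card_erase_of_mem hxτ, hτ]; rfl
  have hmatch := ((F.matching σ hσ).erase hxj).insert (a := y) (b := j)
    (fun h => hy (Finset.mem_of_mem_erase h)) (Finset.notMem_erase j _)
  rw [Finset.insert_erase (Finset.mem_univ j), ← Finset.erase_insert_of_ne hxy.symm] at hmatch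
  refine IsMatching.eq_of_subset_acyclic (F.linkage τ hτ).1.2.1 (hsub x hxτ) ?_
    (F.matching _ hτx) hmatch
  refine Finset.insert_subset (hsub x hxτ hyj) ((Finset.erase_subset ..).trans ?_)
  have := hsub y (Finset.mem_insert_self ..)
  rwa [Finset.erase_insert hy] at this

lemma reducedStack_erasureClosed : ErasureClosed F.reducedStack := by
  intro I J i j hIJ hij
  obtain ⟨hi, hj⟩ := (reducedStack_isMatchingStack I J hIJ).1 _ hij
  have hcard : (I.erase i).card = (J.erase j).card := by
    rw [Finset.card_erase_of_mem hi, Finset.card_erase_of_mem hj, hIJ]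
  have hexch := M_exchange (card_reduceSigma_eq_iff.2 hIJ) (x := inl i) (y := inr j)
    (by simpa using hi) (by simpa using hj) (mem_reducedStack.1 hij) (by
      rw [reduceSigma_insert_inr_erase_inl]
      exact F.pointed _ (card_reduceSigma_eq_iff.2 hcard) j (by simp))
  rw [reduceSigma_insert_inr_erase_inl] at hexch
  ext ⟨i', j'⟩
  simp [hexch]

end PointedMF

section Linkage

open Sum

variable {n d : ℕ} {N : Finset (Fin n) → Finset (Fin d) → BGraph (Fin n) (Fin d)}
  {I : Finset (Fin n)} {J : Finset (Fin d)}

lemma biUnion_unreduce_reduceSigma (hE : ErasureClosed N) (hIJ : I.card = J.card + 1)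
    {ib : Fin d → Fin n} (hibI : ∀ b ∉ J, ib b ∈ I) (hib : ∀ b ∉ J, (ib b, b) ∈ N I (insert b J)) :
    (reduceSigma I J).biUnion (fun x => unreduce N ((reduceSigma I J).erase x)) =
      mapLeft .inl (I.biUnion fun i => N (I.erase i) J) ∪ Jᶜ.image (fun b => (inl (ib b), b)) ∪
        Jᶜ.image (fun b => (inr b, b)) := by
  have hI : ∀ i ∈ I, unreduce N ((reduceSigma I J).erase (inl i)) =
      pointedExtend (N (I.erase i) J) Jᶜ := fun i hi => by
    rw [reduceSigma_erase_inl, unreduce_reduceSigma N (by rw [Finset.card_erase_of_mem hi, hIJ]; rfl)]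
  have hJ : ∀ b ∉ J, unreduce N ((reduceSigma I J).erase (inr b)) =
      pointedExtend (insert (ib b, b) (N (I.erase (ib b)) J)) (insert b J)ᶜ := fun b hb => by
    have hcard : I.card = (insert b J).card := by rw [Finset.card_insert_of_notMem hb, hIJ]
    have h := hE I (insert b J) (ib b) b hcard (hib b hb)
    rw [Finset.erase_insert hb] at h
    rw [reduceSigma_erase_inr, unreduce_reduceSigma N hcard, h, Finset.insert_erase (hib b hb)]
  have hmem : ∀ e, e ∈ (reduceSigma I J).biUnion (fun x => unreduce N ((reduceSigma I J).erase x))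
      ↔ (∃ i ∈ I, e ∈ pointedExtend (N (I.erase i) J) Jᶜ) ∨
        ∃ b ∉ J, e ∈ pointedExtend (insert (ib b, b) (N (I.erase (ib b)) J)) (insert b J)ᶜ := by
    intro e
    rw [Finset.mem_biUnion, exists_mem_reduceSigma]
    exact or_congr (exists_congr fun i => and_congr_right fun hi => by rw [hI i hi])
      (exists_congr fun b => and_congr_right fun hb => by rw [hJ b hb])
  obtain ⟨i₀, hi₀⟩ : I.Nonempty := Finset.card_pos.1 (by omega)
  ext ⟨i | k, j⟩ <;> simp only [hmem] <;> simp
  · constructor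
    · rintro (h | ⟨b, hb, ⟨rfl, rfl⟩ | h⟩)
      exacts [.inl h, .inr ⟨hb, rfl⟩, .inl ⟨ib b, hibI b hb, h⟩]
    · rintro (h | ⟨hj, rfl⟩)
      exacts [.inl h, .inr ⟨j, hj, .inl ⟨rfl, rfl⟩⟩]
  · constructor
    · rintro (⟨-, rfl, hj⟩ | ⟨b, -, rfl, -, hj⟩) <;> exact ⟨hj, rfl⟩
    · rintro ⟨hj, rfl⟩
      exact .inl ⟨⟨i₀, hi₀⟩, rfl, hj⟩

lemma linkage_unreduce_iff (hN : IsMatchingStack N) (hE : ErasureClosed N)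
    (hIJ : I.card = J.card + 1) :
    (IsTreeOn ((reduceSigma I J).biUnion fun x => unreduce N ((reduceSigma I J).erase x))
        (reduceSigma I J) Finset.univ ∧
      ∀ j, RD ((reduceSigma I J).biUnion fun x => unreduce N ((reduceSigma I J).erase x)) j = 2) ↔
    (IsTreeOn (I.biUnion fun i => N (I.erase i) J) I J ∧
      ∀ j ∈ J, RD (I.biUnion fun i => N (I.erase i) J) j = 2) := by
  have hpartner : ∀ b ∉ J, ∃ i ∈ I, (i, b) ∈ N I (insert b J) := fun b hb => by
    have hcard : I.card = (insert b J).card := by rw [Finset.card_insert_of_notMem hb, hIJ]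
    obtain ⟨i, hi, -⟩ := (hN I (insert b J) hcard).2.2 b (Finset.mem_insert_self ..)
    exact ⟨i, ((hN _ _ hcard).1 _ hi).1, hi⟩
  have : Nonempty (Fin n) := ⟨(Finset.card_pos.1 (by omega : 0 < I.card)).choose⟩
  choose! ib hibI hib using hpartner
  have hU : ∀ e ∈ mapLeft (.inl : Fin n ↪ Fin n ⊕ Fin d) (I.biUnion fun i => N (I.erase i) J),
      e.1 ∈ I.map (.inl : Fin n ↪ Fin n ⊕ Fin d) ∧ e.2 ∈ J := by
    rintro ⟨x, j⟩ he
    obtain ⟨i, hi, rfl⟩ := mem_mapLeft.1 he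
    obtain ⟨i', hi', he⟩ := Finset.mem_biUnion.1 hi
    obtain ⟨hi, hj⟩ := (hN _ J (by rw [Finset.card_erase_of_mem hi', hIJ]; rfl)).1 _ he
    exact ⟨by simpa using Finset.mem_of_mem_erase hi, hj⟩
  have hτ : reduceSigma I J = I.map (.inl : Fin n ↪ Fin n ⊕ Fin d) ∪ Jᶜ.image inr := by
    rw [reduceSigma, Finset.map_eq_image]
    rfl
  rw [biUnion_unreduce_reduceSigma hE hIJ hibI hib, hτ, ← Finset.union_compl J,
    isTreeOn_union_pendants hU disjoint_compl_left (by simpa using hibI)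
      (by simp)
      inr_injective.injOn, isTreeOn_mapLeft_iff]
  refine and_congr_right fun _ => ?_
  simp_rw [RD_union_pendants (fun e he => (hU e he).2) disjoint_compl_left
    (fun _ _ => inl_ne_inr), RD_mapLeft, Finset.mem_compl]
  refine ⟨fun h j hj => by simpa [hj] using h j, fun h j => ?_⟩
  by_cases hj : j ∈ J <;> simp [hj, h]

end Linkage

lemma PointedMF.M_injective {n d : ℕ} : Function.Injective (PointedMF.M : PointedMF n d → _) := by
  rintro ⟨⟩ ⟨⟩ ⟨⟩
  rfl

lemma LeftSemiEnsemble.M_injective {n d : ℕ} :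
    Function.Injective (LeftSemiEnsemble.M : LeftSemiEnsemble n d → _) := by
  rintro ⟨⟩ ⟨⟩ ⟨⟩
  rfl

namespace PointedMF

variable {n d : ℕ}

def reduce (F : PointedMF n d) : LeftSemiEnsemble n d where
  M := F.reducedStack
  matching := reducedStack_isMatchingStack
  junk I J h := by
    ext ⟨i, j⟩
    simp [F.junk _ (mt card_reduceSigma_eq_iff.1 h)]
  closure _ _ _ _ _ hIJ hI' hJ' hM hMm :=
    reducedStack_erasureClosed.closure reducedStack_isMatchingStack hIJ hI' hJ' hM hMm
  leftLinkage I J hIJ := by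
    have h := F.linkage _ (card_reduceSigma_eq_succ_iff.2 hIJ)
    rw [M_eq_unreduce] at h
    exact (linkage_unreduce_iff reducedStack_isMatchingStack reducedStack_erasureClosed hIJ).1 h

lemma reduce_injective : Function.Injective (reduce : PointedMF n d → LeftSemiEnsemble n d) := by
  intro F G h
  apply M_injective
  rw [M_eq_unreduce, M_eq_unreduce]
  exact congrArg (unreduce ·) (congrArg LeftSemiEnsemble.M h)

end PointedMF

namespace LeftSemiEnsemble

variable {n d : ℕ}

def toPointedMF (L : LeftSemiEnsemble n d) : PointedMF n d where
  M := unreduce L.M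
  matching σ hσ := by
    obtain ⟨I, J, rfl⟩ : ∃ I J, σ = reduceSigma I J := ⟨_, _, (reduceSigma_toLeft_toRight σ).symm⟩
    have hIJ := card_reduceSigma_eq_iff.1 hσ
    rw [unreduce_reduceSigma _ hIJ, isMatching_pointedExtend_iff]
    exact L.matching I J hIJ
  junk _ hσ := if_neg hσ
  pointed σ hσ j hj := by
    rw [unreduce, if_pos hσ]
    simpa using hj
  linkage τ hτ := by
    obtain ⟨I, J, rfl⟩ : ∃ I J, τ = reduceSigma I J := ⟨_, _, (reduceSigma_toLeft_toRight τ).symm⟩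
    have hIJ := card_reduceSigma_eq_succ_iff.1 hτ
    exact (linkage_unreduce_iff L.isMatchingStack L.erasureClosed hIJ).2 (L.leftLinkage I J hIJ)

lemma reduce_toPointedMF (L : LeftSemiEnsemble n d) : L.toPointedMF.reduce = L := by
  apply M_injective
  funext I J
  by_cases hIJ : I.card = J.card
  · ext ⟨i, j⟩
    simp [PointedMF.reduce, toPointedMF, unreduce_reduceSigma _ hIJ]
  · rw [L.junk I J hIJ]
    exact (PointedMF.reduce _).junk I J hIJ

end LeftSemiEnsemble

theorem statement2 (n d : ℕ) :
    ∃ red : PointedMF n d → LeftSemiEnsemble n d,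
      (∀ (F : PointedMF n d) (I : Finset (Fin n)) (J : Finset (Fin d)),
        (red F).M I J = Finset.univ.filter fun e : Fin n × Fin d =>
          (Sum.inl e.1, e.2) ∈ F.M (reduceSigma I J)) ∧
      Function.Bijective red :=
  ⟨PointedMF.reduce, fun _ _ _ => rfl, PointedMF.reduce_injective,
    fun L => ⟨L.toPointedMF, L.reduce_toPointedMF⟩⟩
end

section
/- Let 𝒯 = {T_v} be an (n,d)-pre-trianguloid with d ≥ 2 and for a lattice point u of (n−1)Δ^{d−1} set 𝕋(u) = ⋃_{j̄∈[d̄]} T_{u+e_j̄}. Let 1 ≤ m ≤ n and let s be a lattice point of (n−m)Δ^{d−1}. Then there are at most m lattice points u of (n−1)Δ^{d−1} with u_j̄ ≥ s_j̄ for all j̄ ∈ [d̄] such that the left degree vector LD(𝕋(u)) has one entry equal to d and all other entries equal to 1 (i.e. such that 𝕋(u) encodes a translated unit simplex). -/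
/-
A vertex `i₀` of degree `d` in `𝕋(u)` is the apex of a unit simplex, and by the sector axiom it
keeps direction `c` in every tope `T_w` with `w ≤ u + e_c` away from the coordinate `c`. Fix
`c₁ ≠ c₂`. Every apex of a `u ≥ s` then lies in `T_{s + m e_{c₁}}⁻¹(c₁) \ T_{s + m e_{c₂}}⁻¹(c₁)`,
which has exactly `m` elements because the second fibre (of size `s_{c₁}`) lies inside the first
(of size `s_{c₁} + m`). It remains that an element is the apex of at most one unit simplex. This
goes by induction on `n`, deleting an element: the deleted family is again a pre-trianguloid
because two topes of a star in which one element sits at its own direction agree on all other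
elements.
-/

open Finset

/-- The union `𝕋(u)` of the topes at the vertices of the unit simplex `u + Δ^{d-1}`. -/
def deltaUnion {n d : ℕ} (T : (Fin d → ℕ) → Fin n → Fin d) (u : Fin d → ℕ) :
    BGraph (Fin n) (Fin d) :=
  Finset.univ.biUnion fun j => topeGraph (T (u + unitVec j))

section UnitVec

variable {d : ℕ}

theorem sum_add_unitVec (u : Fin d → ℕ) (j : Fin d) :
    (∑ k, (u + unitVec j) k) = (∑ k, u k) + 1 := by
  simp [unitVec, Finset.sum_add_distrib]

theorem sum_add_smul_unitVec (u : Fin d → ℕ) (m : ℕ) (j : Fin d) :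
    (∑ k, (u + m • unitVec j) k) = (∑ k, u k) + m := by
  simp [unitVec, Finset.sum_add_distrib]

theorem exists_eq_add_unitVec {u : Fin d → ℕ} {j : Fin d} (h : 0 < u j) :
    ∃ v, u = v + unitVec j := by
  refine ⟨u - unitVec j, (tsub_add_cancel_of_le fun k => ?_).symm⟩
  by_cases hk : k = j <;> simp [unitVec, hk]
  · omega

end UnitVec

section Star

variable {α : Type*} {d : ℕ}

/-- Models the `d` topes `t β = T_{w + e_β}` around a lattice point `w` of `(N-1)Δ^{d-1}`. -/
structure IsStar (E : Finset α) (w : Fin d → ℕ) (t : Fin d → α → Fin d) : Prop where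
  sector : ∀ i ∈ E, ∀ β c, t β i = c → t c i = c
  card_filter_ne : ∀ β c, β ≠ c → #{i ∈ E | t β i = c} = w c
  card_filter_self : ∀ c, #{i ∈ E | t c i = c} = w c + 1

namespace IsStar

variable {E : Finset α} {w : Fin d → ℕ} {t : Fin d → α → Fin d}

theorem card_filter_fixed_not_fixed (hS : IsStar E w t) {β c : Fin d} (hβc : β ≠ c) :
    #{i ∈ E | t c i = c ∧ t β i ≠ c} = 1 := by
  have hsplit := card_filter_add_card_filter_not (s := {i ∈ E | t c i = c}) (fun i => t β i = c)
  have hsub : {i ∈ {i ∈ E | t c i = c} | t β i = c} = {i ∈ E | t β i = c} := by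
    rw [filter_filter]
    exact filter_congr fun i hi => and_iff_right_of_imp (hS.sector i hi β c)
  rw [hsub, filter_filter, hS.card_filter_ne β c hβc, hS.card_filter_self c] at hsplit
  simp only [ne_eq]
  omega

theorem eq_of_fixed_of_not_fixed (hS : IsStar E w t) {β c : Fin d} (hβc : β ≠ c) {x y : α}
    (hx : x ∈ E) (hy : y ∈ E) (hxc : t c x = c) (hyc : t c y = c)
    (hxβ : t β x ≠ c) (hyβ : t β y ≠ c) : x = y :=
  card_le_one.1 (hS.card_filter_fixed_not_fixed hβc).le x (by simp [hx, hxc, hxβ])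
    y (by simp [hy, hyc, hyβ])

theorem apply_ne_of_apply_ne (hS : IsStar E w t) {x : α} (hx : x ∈ E) {β γ : Fin d}
    (h : t β x ≠ t γ x) : t β x ≠ γ :=
  fun hβ => h (hβ.trans (hS.sector x hx β γ hβ).symm)

variable {i₀ : α} {j₀ j₁ : Fin d}

theorem apply_ne_self (hS : IsStar E w t) (hi₀ : i₀ ∈ E) (h₀ : t j₀ i₀ = j₀)
    (h₁ : t j₁ i₀ = j₁) {x : α} (hx : x ∈ E) (hxi : x ≠ i₀) (hne : t j₀ x ≠ t j₁ x) :
    t j₀ x ≠ j₀ := by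
  intro hx₀
  have hj : j₁ ≠ j₀ := fun h => hne (by rw [h])
  exact hxi (hS.eq_of_fixed_of_not_fixed hj hx hi₀ hx₀ h₀ (hx₀ ▸ hne.symm) (h₁.symm ▸ hj))

theorem injOn_apply (hS : IsStar E w t) :
    Set.InjOn (t j₀) {x | x ∈ E ∧ t j₀ x ≠ t j₁ x} := by
  rintro x ⟨hx, hxne⟩ y ⟨hy, hyne⟩ hxy
  exact hS.eq_of_fixed_of_not_fixed (β := j₁) (c := t j₀ x)
    (hS.apply_ne_of_apply_ne hx hxne).symm hx hy (hS.sector x hx j₀ _ rfl)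
    (by rw [hxy]; exact hS.sector y hy j₀ _ rfl) (Ne.symm hxne) (by rw [hxy]; exact Ne.symm hyne)

theorem exists_apply_eq_apply [DecidableEq α] (hS : IsStar E w t) (hi₀ : i₀ ∈ E)
    (h₀ : t j₀ i₀ = j₀) (h₁ : t j₁ i₀ = j₁) {x : α} (hx : x ∈ E) (hxi : x ≠ i₀) (hne : t j₀ x ≠ t j₁ x) :
    ∃ y ∈ E, y ≠ i₀ ∧ t j₀ y ≠ t j₁ y ∧ t j₁ y = t j₀ x := by
  have hγ₀ := hS.apply_ne_self hi₀ h₀ h₁ hx hxi hne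
  have hγ₁ := hS.apply_ne_of_apply_ne hx hne
  by_contra! hnone
  have hsub : {y ∈ E | t j₁ y = t j₀ x} ⊆ {y ∈ E | t j₀ y = t j₀ x}.erase x := by
    intro y hy
    obtain ⟨hyE, hyγ⟩ := mem_filter.1 hy
    have hyi : y ≠ i₀ := by rintro rfl; exact hγ₁ (h₁ ▸ hyγ).symm
    have hyx : y ≠ x := by rintro rfl; exact hne hyγ.symm
    by_cases hy₀ : t j₀ y = t j₁ y
    · exact mem_erase.2 ⟨hyx, mem_filter.2 ⟨hyE, hy₀.trans hyγ⟩⟩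
    · exact absurd hyγ (hnone y hyE hyi hy₀)
  have hcard := card_le_card hsub
  rw [card_erase_of_mem (s := {y ∈ E | t j₀ y = t j₀ x}) (mem_filter.2 ⟨hx, rfl⟩),
    hS.card_filter_ne j₁ _ (Ne.symm hγ₁), hS.card_filter_ne j₀ _ (Ne.symm hγ₀)] at hcard
  have hpos : 0 < w (t j₀ x) := by
    rw [← hS.card_filter_ne j₀ _ (Ne.symm hγ₀)]
    exact card_pos.2 ⟨x, mem_filter.2 ⟨hx, rfl⟩⟩
  omega

theorem apply_eq_apply_of_fixed [DecidableEq α] (hS : IsStar E w t) (hi₀ : i₀ ∈ E)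
    (h₀ : t j₀ i₀ = j₀) (h₁ : t j₁ i₀ = j₁) {x₁ : α} (hx₁ : x₁ ∈ E) (hx₁i : x₁ ≠ i₀) : t j₀ x₁ = t j₁ x₁ := by
  by_contra hne₁
  set C := t j₀ x₁
  set Z := {x ∈ E | x ≠ i₀ ∧ t j₀ x ≠ t j₁ x ∧ t C x = t j₁ x}
  have hinj := hS.injOn_apply (j₀ := j₀) (j₁ := j₁)
  have hx₁C : t C x₁ = C := hS.sector x₁ hx₁ j₀ C rfl
  have hx₁Z : x₁ ∉ Z := fun h => hne₁ (hx₁C.symm.trans (mem_filter.1 h).2.2.2)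
  have hD : ∀ x ∈ insert x₁ Z, x ∈ E ∧ x ≠ i₀ ∧ t j₀ x ≠ t j₁ x := by
    intro x hx
    rcases mem_insert.1 hx with rfl | hxZ
    · exact ⟨hx₁, hx₁i, hne₁⟩
    · exact ⟨(mem_filter.1 hxZ).1, (mem_filter.1 hxZ).2.1, (mem_filter.1 hxZ).2.2.1⟩
  -- Walking back along `t j₁ y = t j₀ x` stays inside `Z`, so `t j₀` would inject
  -- `insert x₁ Z` into `t j₁ '' Z`.
  have hmaps : Set.MapsTo (t j₀) ↑(insert x₁ Z) ↑(Z.image (t j₁)) := by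
    intro x hx
    obtain ⟨hxE, hxi, hxne⟩ := hD x hx
    obtain ⟨y, hyE, hyi, hyne, hy⟩ := hS.exists_apply_eq_apply hi₀ h₀ h₁ hxE hxi hxne
    refine mem_image.2 ⟨y, mem_filter.2 ⟨hyE, hyi, hyne, ?_⟩, hy⟩
    rcases mem_insert.1 hx with rfl | hxZ
    · exact (hS.sector y hyE j₁ C hy).trans hy.symm
    have hxC : t j₀ x ≠ C := fun h =>
      hx₁Z (hinj ⟨hxE, hxne⟩ ⟨hx₁, hne₁⟩ h ▸ hxZ)
    by_contra hyC
    have hxy : x = y := hS.eq_of_fixed_of_not_fixed (β := C) (c := t j₀ x) (Ne.symm hxC) hxE hyE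
      (hS.sector x hxE j₀ _ rfl) (by rw [← hy]; exact hS.sector y hyE j₁ _ rfl)
      (by rw [(mem_filter.1 hxZ).2.2.2]; exact Ne.symm hxne) (by rw [← hy]; exact hyC)
    subst hxy
    exact hxne hy.symm
  have hcard := card_le_card_of_injOn (t j₀) hmaps
    (hinj.mono fun x hx => show x ∈ E ∧ _ from ⟨(hD x hx).1, (hD x hx).2.2⟩)
  rw [card_insert_of_notMem hx₁Z] at hcard
  have := card_image_le (s := Z) (f := t j₁)
  omega

end IsStar

end Star

section PreTrianguloid

variable {α : Type*} {d : ℕ}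

/-- The elements range over a finset `E` rather than `Fin N`, so that deleting one stays in the
same type; the values of `T v` outside `E` play no role. -/
structure IsPreTrianguloid_s10 (E : Finset α) (N : ℕ) (T : (Fin d → ℕ) → α → Fin d) : Prop where
  card_filter_eq : ∀ v : Fin d → ℕ, (∑ k, v k) = N → ∀ c, #{i ∈ E | T v i = c} = v c
  sector : ∀ (u : Fin d → ℕ) (j j' : Fin d), (∑ k, u k) + 1 = N →
    ∀ i ∈ E, T (u + unitVec j') i = j → T (u + unitVec j) i = j

/-- `𝕋(u)` encodes a unit simplex with apex `i₀`: `LD (𝕋(u))` is `d` at `i₀` and `1` elsewhere. -/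
structure IsApex (E : Finset α) (T : (Fin d → ℕ) → α → Fin d) (u : Fin d → ℕ) (i₀ : α) :
    Prop where
  mem : i₀ ∈ E
  apply_self : ∀ j, T (u + unitVec j) i₀ = j
  apply_eq : ∀ x ∈ E, x ≠ i₀ → ∀ j j', T (u + unitVec j) x = T (u + unitVec j') x

def fixedDir (T : (Fin d → ℕ) → α → Fin d) (a : α) (j₀ : Fin d) (w : Fin d → ℕ) : Fin d :=
  T (w + unitVec j₀) a

/-- The deletion of `a`: at a lattice point `w` of `(N-1)Δ^{d-1}`, a tope of the star at `w` in
which `a` sits at its own direction (`apply_fixedDir`); all such topes agree off `a`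
(`IsStar.apply_eq_apply_of_fixed`). -/
def deleteElem (T : (Fin d → ℕ) → α → Fin d) (a : α) (j₀ : Fin d) :
    (Fin d → ℕ) → α → Fin d :=
  fun w => T (w + unitVec (fixedDir T a j₀ w))

namespace IsPreTrianguloid_s10

variable {E : Finset α} {N : ℕ} {T : (Fin d → ℕ) → α → Fin d}

theorem isStar (hT : IsPreTrianguloid_s10 E N T) {w : Fin d → ℕ} (hw : (∑ k, w k) + 1 = N) :
    IsStar E w fun β => T (w + unitVec β) where
  sector i hi β c h := hT.sector w c β hw i hi h
  card_filter_ne β c hβc := by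
    rw [hT.card_filter_eq _ (by rw [sum_add_unitVec, hw]) c]
    simp [unitVec, Ne.symm hβc]
  card_filter_self c := by
    rw [hT.card_filter_eq _ (by rw [sum_add_unitVec, hw]) c]
    simp [unitVec]

theorem apply_eq_of_le (hT : IsPreTrianguloid_s10 E N T) {i : α} (hi : i ∈ E) {c : Fin d}
    {y w : Fin d → ℕ} (hy : (∑ k, y k) = N) (hw : (∑ k, w k) = N)
    (hle : ∀ l, l ≠ c → w l ≤ y l) (h : T y i = c) : T w i = c := by
  obtain ⟨k, hk⟩ : ∃ k, w c - y c = k := ⟨_, rfl⟩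
  induction k generalizing y with
  | zero =>
    have hwy : ∀ l ∈ univ, w l ≤ y l := fun l _ => by
      by_cases hl : l = c
      · subst hl; omega
      · exact hle l hl
    obtain rfl : w = y := funext fun l =>
      (sum_eq_sum_iff_of_le hwy).1 (hw.trans hy.symm) l (mem_univ l)
    exact h
  | succ k ih =>
    obtain ⟨l, hlc, hl⟩ : ∃ l, l ≠ c ∧ w l < y l := by
      by_contra! hyw
      have hyw' : ∀ l ∈ univ, y l ≤ w l := fun l _ => by
        by_cases hl : l = c
        · subst hl; omega
        · exact hyw l hl
      have := sum_lt_sum hyw' ⟨c, mem_univ c, by omega⟩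
      omega
    obtain ⟨y, rfl⟩ := exists_eq_add_unitVec (show 0 < y l by omega)
    have hy' : (∑ k, y k) + 1 = N := by rw [← sum_add_unitVec y l, hy]
    refine ih (y := y + unitVec c) (by rw [sum_add_unitVec, hy']) (fun l' hl' => ?_)
      (hT.sector y c l hy' i hi h) ?_
    · have := hle l' hl'
      by_cases hl'l : l' = l
      · subst hl'l; simp [unitVec, hl'] at this hl ⊢; omega
      · simp [unitVec, hl', hl'l] at this ⊢; omega
    · simp [unitVec, Ne.symm hlc] at hk ⊢; omega

theorem apply_fixedDir (hT : IsPreTrianguloid_s10 E N T) {w : Fin d → ℕ}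
    (hw : (∑ k, w k) + 1 = N) {a : α} (ha : a ∈ E) (j₀ : Fin d) :
    T (w + unitVec (fixedDir T a j₀ w)) a = fixedDir T a j₀ w :=
  hT.sector w _ j₀ hw a ha rfl

variable [DecidableEq α]

theorem apply_eq_apply_of_fixed (hT : IsPreTrianguloid_s10 E N T) {w : Fin d → ℕ}
    (hw : (∑ k, w k) + 1 = N) {a x : α} (ha : a ∈ E) {p q : Fin d}
    (hp : T (w + unitVec p) a = p) (hq : T (w + unitVec q) a = q) (hx : x ∈ E) (hxa : x ≠ a) :
    T (w + unitVec p) x = T (w + unitVec q) x :=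
  (hT.isStar hw).apply_eq_apply_of_fixed ha hp hq hx hxa

/-- The sector axiom of the deletion. The direction `r` of `a` in `T_{z + e_j + e_j'}` is fixed
for `a` in both stars at `z + e_j` and `z + e_j'`, and the value `j` of `x` travels through the
topes at `r`. -/
theorem apply_eq_of_apply_eq_of_fixed (hT : IsPreTrianguloid_s10 E N T) {z : Fin d → ℕ}
    (hz : (∑ k, z k) + 2 = N) {a x : α} (ha : a ∈ E) (hx : x ∈ E) (hxa : x ≠ a)
    {j j' p q : Fin d} (hp : T (z + unitVec j' + unitVec p) a = p)
    (hq : T (z + unitVec j + unitVec q) a = q) (h : T (z + unitVec j' + unitVec p) x = j) :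
    T (z + unitVec j + unitVec q) x = j := by
  have hz' : ∀ β : Fin d, (∑ k, (z + unitVec β) k) + 1 = N := fun β => by
    rw [sum_add_unitVec]; omega
  set r := T (z + unitVec j + unitVec j') a
  have hr : T (z + unitVec j + unitVec r) a = r := hT.sector _ r j' (hz' j) a ha rfl
  have hr' : T (z + unitVec j' + unitVec r) a = r :=
    hT.sector _ r j (hz' j') a ha (by rw [add_right_comm])
  have hxr : T (z + unitVec r + unitVec j') x = j := by
    rw [add_right_comm, hT.apply_eq_apply_of_fixed (hz' j') ha hr' hp hx hxa, h]
  have hxr' : T (z + unitVec j + unitVec r) x = j := by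
    rw [add_right_comm]; exact hT.sector _ j j' (hz' r) x hx hxr
  rw [hT.apply_eq_apply_of_fixed (hz' j) ha hq hr hx hxa, hxr']

theorem deleteElem_apply (hT : IsPreTrianguloid_s10 E N T) {w : Fin d → ℕ}
    (hw : (∑ k, w k) + 1 = N) {a x : α} (ha : a ∈ E) (j₀ : Fin d) {b : Fin d}
    (hb : T (w + unitVec b) a = b) (hx : x ∈ E) (hxa : x ≠ a) :
    deleteElem T a j₀ w x = T (w + unitVec b) x :=
  hT.apply_eq_apply_of_fixed hw ha (hT.apply_fixedDir hw ha j₀) hb hx hxa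

theorem deleteElem (hT : IsPreTrianguloid_s10 E (N + 1) T) {a : α} (ha : a ∈ E) (j₀ : Fin d) :
    IsPreTrianguloid_s10 (E.erase a) N (deleteElem T a j₀) where
  card_filter_eq v hv c := by
    have hfix := hT.apply_fixedDir (by omega) ha j₀ (w := v)
    rw [_root_.deleteElem, filter_erase]
    by_cases hc : c = fixedDir T a j₀ v
    · subst hc
      rw [card_erase_of_mem (mem_filter.2 ⟨ha, hfix⟩),
        hT.card_filter_eq _ (by rw [sum_add_unitVec, hv]) _]
      simp [unitVec]
    · rw [erase_eq_of_notMem fun h => hc ((mem_filter.1 h).2.symm.trans hfix),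
        hT.card_filter_eq _ (by rw [sum_add_unitVec, hv]) _]
      simp [unitVec, hc]
  sector u j j' hu x hx h :=
    hT.apply_eq_of_apply_eq_of_fixed (by omega) ha (mem_of_mem_erase hx) (ne_of_mem_erase hx)
      (hT.apply_fixedDir (by rw [sum_add_unitVec]; omega) ha j₀)
      (hT.apply_fixedDir (by rw [sum_add_unitVec]; omega) ha j₀) h

end IsPreTrianguloid_s10

end PreTrianguloid

namespace IsApex

variable {α : Type*} [DecidableEq α] {d : ℕ} {E : Finset α} {N : ℕ}
  {T : (Fin d → ℕ) → α → Fin d} {u : Fin d → ℕ} {i₀ : α}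

theorem card_filter_erase (h : IsApex E T u i₀) (hT : IsPreTrianguloid_s10 E N T)
    (hu : (∑ k, u k) + 1 = N) (c : Fin d) :
    #{x ∈ E.erase i₀ | T (u + unitVec c) x = c} = u c := by
  rw [filter_erase, card_erase_of_mem (mem_filter.2 ⟨h.mem, h.apply_self c⟩),
    hT.card_filter_eq _ (by rw [sum_add_unitVec, hu]) c]
  simp [unitVec]

theorem deleteElem {c : Fin d} (h : IsApex E T (u + unitVec c) i₀)
    (hT : IsPreTrianguloid_s10 E (N + 1) T) (hu : (∑ k, u k) + 1 = N) {a : α} (ha : a ∈ E) (hai : a ≠ i₀) {j : Fin d}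
    (hac : T (u + unitVec c + unitVec j) a = c) (j₀ : Fin d) :
    IsApex (E.erase a) (_root_.deleteElem T a j₀) u i₀ := by
  have hdel : ∀ β, ∀ x ∈ E, x ≠ a → _root_.deleteElem T a j₀ (u + unitVec β) x
      = T (u + unitVec c + unitVec β) x := fun β x hx hxa => by
    have haβ : T (u + unitVec β + unitVec c) a = c := by
      rw [add_right_comm, h.apply_eq a ha hai β j, hac]
    rw [hT.deleteElem_apply (by rw [sum_add_unitVec]; omega) ha j₀ haβ hx hxa, add_right_comm]
  refine ⟨mem_erase.2 ⟨Ne.symm hai, h.mem⟩, fun β => ?_, fun x hx hxi β β' => ?_⟩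
  · rw [hdel β i₀ h.mem (Ne.symm hai), h.apply_self]
  · obtain ⟨hxa, hxE⟩ := mem_erase.1 hx
    rw [hdel β x hxE hxa, hdel β' x hxE hxa, h.apply_eq x hxE hxi]

end IsApex

/-- Fibre counting gives an element `a` that `T_{u + e_c}` sends to `c` and `T_{u' + e_c}` to some
`b ≠ c`; deleting `a` reduces `u = u'` to `u - e_c = u' - e_b`, and then `T_{u + e_b} = T_{u' + e_c}`
would put `i₀` at both `b` and `c`. -/
theorem IsPreTrianguloid_s10.eq_of_isApex {α : Type*} [DecidableEq α] {d N : ℕ} {E : Finset α}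
    {T : (Fin d → ℕ) → α → Fin d} (hT : IsPreTrianguloid_s10 E N T) {u u' : Fin d → ℕ} {i₀ : α}
    (hu : (∑ k, u k) + 1 = N) (hu' : (∑ k, u' k) + 1 = N) (h : IsApex E T u i₀)
    (h' : IsApex E T u' i₀) : u = u' := by
  induction N generalizing E T u u' with
  | zero => omega
  | succ N ih =>
    suffices key : ∀ u u' : Fin d → ℕ, (∑ k, u k) + 1 = N + 1 → (∑ k, u' k) + 1 = N + 1 →
        IsApex E T u i₀ → IsApex E T u' i₀ → ∀ c, u c ≤ u' c from
      funext fun c => le_antisymm (key u u' hu hu' h h' c) (key u' u hu' hu h' h c)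
    intro u u' hu hu' h h' c
    by_contra! hlt
    obtain ⟨a, ha, ha'⟩ := exists_mem_notMem_of_card_lt_card
      (s := {x ∈ E.erase i₀ | T (u' + unitVec c) x = c})
      (t := {x ∈ E.erase i₀ | T (u + unitVec c) x = c})
      (by rwa [h.card_filter_erase hT hu, h'.card_filter_erase hT hu'])
    obtain ⟨⟨hai, haE⟩, hac⟩ := by simpa only [mem_filter, mem_erase] using ha
    obtain ⟨b, hab⟩ : ∃ b, T (u' + unitVec c) a = b := ⟨_, rfl⟩
    have hbc : b ≠ c := fun hbc => ha' (mem_filter.2 ⟨mem_erase.2 ⟨hai, haE⟩, hab.trans hbc⟩)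
    have hb : 0 < u' b := by
      rw [← h'.card_filter_erase hT hu' b]
      exact card_pos.2 ⟨a, mem_filter.2 ⟨mem_erase.2 ⟨hai, haE⟩,
        (h'.apply_eq a haE hai b c).trans hab⟩⟩
    obtain ⟨v, rfl⟩ := exists_eq_add_unitVec (show 0 < u c by omega)
    obtain ⟨v', rfl⟩ := exists_eq_add_unitVec hb
    rw [sum_add_unitVec] at hu hu'
    obtain rfl : v = v' := ih (hT.deleteElem haE c) (by omega) (by omega)
      (h.deleteElem hT (by omega) haE hai hac c) (h'.deleteElem hT (by omega) haE hai hab c)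
    have hib := h.apply_self b
    rw [add_right_comm, h'.apply_self c] at hib
    exact hbc hib.symm

theorem IsApex.apply_add_smul_unitVec {α : Type*} {d N : ℕ} {E : Finset α}
    {T : (Fin d → ℕ) → α → Fin d} {u s : Fin d → ℕ} {i₀ : α} (h : IsApex E T u i₀)
    (hT : IsPreTrianguloid_s10 E N T) (hu : (∑ k, u k) + 1 = N) (hsu : ∀ j, s j ≤ u j) {m : ℕ}
    (hs : (∑ k, s k) + m = N) (c : Fin d) : T (s + m • unitVec c) i₀ = c :=
  hT.apply_eq_of_le h.mem (by rw [sum_add_unitVec, hu]) (by rw [sum_add_smul_unitVec, hs])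
    (fun l hl => by simpa [unitVec, hl] using hsu l) (h.apply_self c)

section Topes

variable {n d : ℕ}

theorem LD_deltaUnion (T : (Fin d → ℕ) → Fin n → Fin d) (u : Fin d → ℕ) (i : Fin n) :
    LD (deltaUnion T u) i = #(univ.image fun j => T (u + unitVec j) i) := by
  have : {e ∈ deltaUnion T u | e.1 = i}
      = (univ.image fun j => T (u + unitVec j) i).map ⟨Prod.mk i, Prod.mk_right_injective i⟩ := by
    ext ⟨a, b⟩
    simp only [deltaUnion, topeGraph, mem_filter, mem_biUnion, mem_image, mem_univ, true_and,
      mem_map, Function.Embedding.coeFn_mk, Prod.mk.injEq]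
    constructor
    · rintro ⟨⟨j, x, hx, hb⟩, rfl⟩
      exact ⟨b, ⟨j, hx ▸ hb⟩, rfl, rfl⟩
    · rintro ⟨b, ⟨j, hb⟩, rfl, rfl⟩
      exact ⟨⟨j, _, rfl, hb⟩, rfl⟩
  rw [LD, this, card_map]

theorem isApex_of_LD {T : (Fin d → ℕ) → Fin n → Fin d} (hT : IsPreTrianguloid_s10 univ n T)
    {u : Fin d → ℕ} (hu : (∑ k, u k) + 1 = n) {i₀ : Fin n} (h₀ : LD (deltaUnion T u) i₀ = d)
    (h₁ : ∀ i, i ≠ i₀ → LD (deltaUnion T u) i = 1) : IsApex univ T u i₀ where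
  mem := mem_univ i₀
  apply_self j := by
    rw [LD_deltaUnion] at h₀
    obtain ⟨j', -, hj'⟩ := mem_image.1
      ((eq_univ_of_card _ (h₀.trans (Fintype.card_fin d).symm)).symm ▸ mem_univ j)
    exact hT.sector u j j' hu i₀ (mem_univ i₀) hj'
  apply_eq x _ hx j j' := by
    have := h₁ x hx
    rw [LD_deltaUnion] at this
    exact card_le_one.1 this.le _ (mem_image_of_mem _ (mem_univ j)) _
      (mem_image_of_mem _ (mem_univ j'))

end Topes

theorem statement10_general {n d : ℕ} (hd : 2 ≤ d) (T : (Fin d → ℕ) → Fin n → Fin d)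
    (hpos : ∀ v : Fin d → ℕ, (∑ j, v j) = n → topePos (T v) = v)
    (hsector : ∀ (u : Fin d → ℕ) (j j' : Fin d), (∑ k, u k) + 1 = n →
      ∀ i, T (u + unitVec j') i = j → T (u + unitVec j) i = j)
    (m : ℕ) (s : Fin d → ℕ) (hs : (∑ j, s j) + m = n)
    (S : Finset (Fin d → ℕ))
    (hS : ∀ u ∈ S, ((∑ j, u j) + 1 = n ∧ ∀ j, s j ≤ u j) ∧
      ∃ i0 : Fin n, LD (deltaUnion T u) i0 = d ∧
        ∀ i : Fin n, i ≠ i0 → LD (deltaUnion T u) i = 1) :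
    S.card ≤ m := by
  have hT : IsPreTrianguloid_s10 univ n T :=
    ⟨fun v hv c => congrFun (hpos v hv) c, fun u j j' hu i _ => hsector u j j' hu i⟩
  obtain ⟨c₁, c₂, hc⟩ : ∃ c₁ c₂ : Fin d, c₁ ≠ c₂ :=
    ⟨⟨0, by omega⟩, ⟨1, hd⟩, by simp [Fin.ext_iff]⟩
  set X : Finset (Fin n) := {i | T (s + m • unitVec c₁) i = c₁}
  set Y : Finset (Fin n) := {i | T (s + m • unitVec c₂) i = c₁}
  have hX : #X = s c₁ + m := by
    rw [hT.card_filter_eq _ (by rw [sum_add_smul_unitVec, hs])]; simp [unitVec]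
  have hY : #Y = s c₁ := by
    rw [hT.card_filter_eq _ (by rw [sum_add_smul_unitVec, hs])]; simp [unitVec, hc]
  have hYX : Y ⊆ X := fun i hi => mem_filter.2 ⟨mem_univ i,
    hT.apply_eq_of_le (mem_univ i) (by rw [sum_add_smul_unitVec, hs])
      (by rw [sum_add_smul_unitVec, hs]) (fun l hl => by simp [unitVec, hl]) (mem_filter.1 hi).2⟩
  calc S.card
      ≤ #(X \ Y) := by
        refine card_le_card_of_forall_subsingleton (fun u i => IsApex univ T u i)
          (fun u hu => ?_) fun i _ u ⟨hu, h⟩ u' ⟨hu', h'⟩ =>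
            hT.eq_of_isApex (hS u hu).1.1 (hS u' hu').1.1 h h'
        obtain ⟨⟨hsum, hsu⟩, i₀, h₀, h₁⟩ := hS u hu
        have h := isApex_of_LD hT hsum h₀ h₁
        have happ := h.apply_add_smul_unitVec hT hsum hsu hs
        refine ⟨i₀, ?_, h⟩
        simpa only [X, Y, mem_sdiff, mem_filter, mem_univ, true_and, happ] using hc.symm
    _ = m := by rw [card_sdiff_of_subset hYX, hX, hY]; omega

theorem statement10 {n d : ℕ} (hd : 2 ≤ d) (T : (Fin d → ℕ) → Fin n → Fin d)
    (hpos : ∀ v : Fin d → ℕ, (∑ j, v j) = n → topePos (T v) = v)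
    (hsector : ∀ (u : Fin d → ℕ) (j j' : Fin d), (∑ k, u k) + 1 = n →
      ∀ i, T (u + unitVec j') i = j → T (u + unitVec j) i = j)
    (m : ℕ) (hm1 : 1 ≤ m) (hmn : m ≤ n) (s : Fin d → ℕ) (hs : (∑ j, s j) + m = n)
    (S : Finset (Fin d → ℕ))
    (hS : ∀ u ∈ S, ((∑ j, u j) + 1 = n ∧ ∀ j, s j ≤ u j) ∧
      ∃ i0 : Fin n, LD (deltaUnion T u) i0 = d ∧
        ∀ i : Fin n, i ≠ i0 → LD (deltaUnion T u) i = 1) :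
    S.card ≤ m :=
  statement10_general hd T hpos hsector m s hs S hS
end
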